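/- arXiv:2209.10863 — 9 statements merged into one kernel-verified Lean document; each statement's English description precedes it below -/
import Mathlib

section
/- Let q = 2^(2e+1) with e ≥ 1 and σ = 2^(e+1). The map x ↦ x^(σ+2) is a permutation of F_q. -/
lemma coprime_aux (e : ℕ) : Nat.Coprime (2 ^ (e + 1) + 2) (2 ^ (2 * e + 1) - 1) := by
  have h2 : 2 ^ (e + 1) + 2 = 2 * (2 ^ e + 1) := by ring
  rw [h2]
  obtain ⟨b, hb⟩ : ∃ b, 2 ^ e = b + 1 := ⟨2 ^ e - 1, by have := Nat.one_le_two_pow (n := e); omega⟩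
  have hq : 2 ^ (2 * e + 1) - 1 = (2 * b) * (2 ^ e + 1) + 1 := by
    have h3 : 2 ^ (2 * e + 1) = 2 * (2 ^ e * 2 ^ e) := by ring
    rw [h3, hb]; ring_nf; omega
  apply Nat.Coprime.mul
  · have hodd : 2 ^ (2 * e + 1) - 1 = 2 * (2 ^ (2 * e) - 1) + 1 := by
      have h1 : 1 ≤ 2 ^ (2 * e) := Nat.one_le_two_pow
      have h2' : 2 ^ (2 * e + 1) = 2 * 2 ^ (2 * e) := by ring
      omega
    rw [hodd]
    simp [Nat.coprime_two_left, Nat.odd_iff, Nat.add_mul_mod_self_left]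
  · rw [hq]
    simpa using (Nat.coprime_one_right (2 ^ e + 1)).add_mul_left_right (2 * b) |>.symm

/-- `x ↦ x^(σ+2)` is a permutation of `F_q`, `q = 2^(2e+1)`, `σ = 2^(e+1)`. -/
theorem stmt_2 (e : ℕ) (he : 1 ≤ e) (F : Type*) [Field F] [Fintype F]
    (hF : Fintype.card F = 2 ^ (2 * e + 1)) :
    Function.Bijective (fun x : F => x ^ (2 ^ (e + 1) + 2)) := by
  set n := 2 ^ (e + 1) + 2 with hn
  have hcard : Nat.card Fˣ = 2 ^ (2 * e + 1) - 1 := by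
    have : Nat.card Fˣ = Nat.card F - 1 := by
      classical rw [Nat.card_eq_fintype_card, Nat.card_eq_fintype_card, Fintype.card_units]
    rw [this, Nat.card_eq_fintype_card, hF]
  have hcop : (Nat.card Fˣ).Coprime n := by
    rw [hcard]; exact (coprime_aux e).symm
  have hu : Function.Bijective (fun u : Fˣ => u ^ n) := hcop.pow_left_bijective
  have hn0 : n ≠ 0 := by positivity
  refine (Finite.injective_iff_bijective).mp ?_
  intro x y hxy
  simp only at hxy
  rcases eq_or_ne x 0 with rfl | hx
  · rcases eq_or_ne y 0 with rfl | hy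
    · rfl
    · rw [zero_pow hn0] at hxy; exact absurd hxy.symm (pow_ne_zero _ hy)
  · rcases eq_or_ne y 0 with rfl | hy
    · rw [zero_pow hn0] at hxy; exact absurd hxy (pow_ne_zero _ hx)
    · have := hu.injective (a₁ := Units.mk0 x hx) (a₂ := Units.mk0 y hy) (by
        ext; simpa using hxy)
      simpa using congrArg Units.val this
end

section
/- Let q = 2^(2e+1) with e ≥ 1 and σ = 2^(e+1). The map x ↦ x^(σ-2) (interpreted as x^σ / x^2 for x ≠ 0, and 0 ↦ 0) is a permutation of F_q. -/
lemma cop_aux (e : ℕ) : Nat.Coprime (2 ^ e - 1) (2 ^ (2 * e + 1) - 1) := by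
  have h1 : (1 : ℕ) ≤ 2 ^ e := Nat.one_le_two_pow
  obtain ⟨a, ha⟩ : ∃ a, 2 ^ e = a + 1 := ⟨2 ^ e - 1, by omega⟩
  have key : 2 ^ (2 * e + 1) - 1 = 1 + (2 * a + 4) * (2 ^ e - 1) := by
    have h2 : (2:ℕ) ^ (2 * e + 1) = (a + 1) * (a + 1) * 2 := by
      rw [two_mul, pow_add, pow_add, pow_one, ha]
    rw [h2, ha, Nat.add_sub_cancel, Nat.sub_eq_iff_eq_add (Nat.one_le_iff_ne_zero.mpr (by positivity))]
    ring
  rw [key]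
  exact (Nat.coprime_add_mul_right_right _ 1 _).mpr (Nat.coprime_one_right _)

/-- `x ↦ x^(σ-2)` (interpreted as `x^σ / x^2` for `x ≠ 0`, and `0 ↦ 0`)
is a permutation of `F_q`, `q = 2^(2e+1)`, `σ = 2^(e+1)`. -/
theorem stmt_3 (e : ℕ) (he : 1 ≤ e) (F : Type*) [Field F] [Fintype F]
    (hF : Fintype.card F = 2 ^ (2 * e + 1)) :
    Function.Bijective (fun x : F => x ^ (2 ^ (e + 1)) / x ^ 2) := by
  set n : ℕ := 2 ^ (e + 1) - 2 with hn
  have h2 : (2:ℕ) ≤ 2 ^ (e + 1) := by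
    calc (2:ℕ) = 2 ^ 1 := rfl
    _ ≤ 2 ^ (e+1) := Nat.pow_le_pow_right (by norm_num) (by omega)
  have hcardu : Nat.card Fˣ = 2 ^ (2 * e + 1) - 1 := by
    rw [Nat.card_units, Nat.card_eq_fintype_card, hF]
  have hodd : Nat.Coprime (2 ^ (2 * e + 1) - 1) 2 := by
    rw [Nat.coprime_two_right]
    have h3 : (2:ℕ) ^ (2 * e + 1) = 2 * 2 ^ (2 * e) := by rw [pow_succ]; ring
    have h4 : (1:ℕ) ≤ 2 ^ (2 * e) := Nat.one_le_two_pow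
    rw [Nat.odd_iff]; omega
  have hcop : (Nat.card Fˣ).Coprime n := by
    rw [hcardu]
    have hne : n = 2 * (2 ^ e - 1) := by
      have : (2:ℕ) ^ (e + 1) = 2 ^ e * 2 := pow_succ 2 e
      have h1 : (1 : ℕ) ≤ 2 ^ e := Nat.one_le_two_pow
      rw [hn]; omega
    rw [hne]
    exact Nat.Coprime.mul_right hodd (cop_aux e).symm
  have hbij := hcop.pow_left_bijective (G := Fˣ)
  have hinj : Function.Injective (fun x : F => x ^ (2 ^ (e + 1)) / x ^ 2) := by
    intro x y h
    simp only at h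
    rcases eq_or_ne x 0 with rfl | hx
    · rcases eq_or_ne y 0 with rfl | hy
      · rfl
      · exfalso
        rw [zero_pow (by positivity), zero_div] at h
        exact (div_ne_zero (pow_ne_zero _ hy) (pow_ne_zero _ hy)) h.symm
    · rcases eq_or_ne y 0 with rfl | hy
      · exfalso
        rw [zero_pow (by positivity), zero_div] at h
        exact (div_ne_zero (pow_ne_zero _ hx) (pow_ne_zero _ hx)) h
      · have hdiv : ∀ z : F, z ≠ 0 → z ^ (2 ^ (e + 1)) / z ^ 2 = z ^ n := by
          intro z hz
          have : z ^ n * z ^ 2 = z ^ (2 ^ (e + 1)) := by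
            rw [← pow_add]; congr 1; rw [hn]; omega
          rw [← this, mul_div_assoc, div_self (pow_ne_zero _ hz), mul_one]
        rw [hdiv x hx, hdiv y hy] at h
        lift x to Fˣ using hx.isUnit with X
        lift y to Fˣ using hy.isUnit with Y
        have hXY : (X ^ n : Fˣ) = Y ^ n := by
          ext
          push_cast
          exact_mod_cast h
        exact congrArg _ (hbij.injective hXY)
  exact (Finite.injective_iff_bijective).mp hinj
end

section
/- Let q = 2^(2e+1) and δ ∈ F_q nonzero. The group G = F_q × F_q with operation (u,v)·(s,t) = (u+s, t+v+suδ) is abelian and is isomorphic to (Z/4Z)^(2e+1). -/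
/-!
Write `G` additively. In characteristic 2 doubling is `2 • (u, v) = (0, u² δ)`, so `4 • G = 0` and
`G` is a `ZMod 4`-module. Lifting an `𝔽₂`-basis `b` of `F` to the elements `(bᵢ, 0)` gives a
`ZMod 4`-linear map `ψ : (ι → ZMod 4) → G`. The first coordinate of `ψ a` is `∑ (aᵢ mod 2) • bᵢ`,
so a kernel element is of the form `a = 2 • c`. Then `ψ a = 2 • ψ c` vanishes only if the first
coordinate of `ψ c` does, as `δ ≠ 0`, so `c` is even as well and `a = 0`. Both sides have
`4 ^ |ι|` elements, so `ψ` is an isomorphism.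
-/

/-- The group operation `(u,v)·(s,t) = (u+s, t+v+suδ)` on `F_q × F_q`. -/
def btMul {F : Type*} [Field F] (δ : F) (p r : F × F) : F × F :=
  (p.1 + r.1, r.2 + p.2 + r.1 * p.1 * δ)

theorem btMul_comm {F : Type*} [Field F] (δ : F) (p r : F × F) :
    btMul δ p r = btMul δ r p := by
  simp only [btMul, Prod.mk.injEq]
  constructor <;> ring

theorem ZMod.four_exists_eq_two_nsmul (a : ZMod 4) (ha : (a.val : ZMod 2) = 0) : ∃ c, a = 2 • c := by
  revert a; decide

theorem ZMod.four_two_nsmul_eq_zero_iff (c : ZMod 4) : 2 • c = 0 ↔ (c.val : ZMod 2) = 0 := by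
  revert c; decide

/-- The group `G`, with `btMul δ` as addition. -/
def BTGroup {F : Type*} [Field F] (_δ : F) : Type _ := F × F

namespace BTGroup

variable {F : Type*} [Field F] (δ : F)

instance : Add (BTGroup δ) := ⟨btMul δ⟩
instance : Zero (BTGroup δ) := ⟨((0 : F), (0 : F))⟩
instance : Neg (BTGroup δ) := ⟨fun p : F × F => (-p.1, -p.2 + p.1 * p.1 * δ)⟩

instance : AddCommGroup (BTGroup δ) where
  add_assoc p r s := by
    change btMul δ (btMul δ p r) s = btMul δ p (btMul δ r s)
    simp only [btMul, Prod.mk.injEq]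
    constructor <;> ring
  zero_add p := by
    change btMul δ (0, 0) p = p
    simp only [btMul, zero_add, mul_zero, zero_mul, add_zero]
    rfl
  add_zero p := by
    change btMul δ p (0, 0) = p
    simp only [btMul, add_zero, zero_add, zero_mul]
    rfl
  neg_add_cancel p := by
    change btMul δ (-p.1, -p.2 + p.1 * p.1 * δ) p = (0, 0)
    simp only [btMul, Prod.mk.injEq]
    constructor <;> ring
  add_comm := btMul_comm δ
  nsmul := nsmulRec
  zsmul := zsmulRec

theorem add_def (p r : BTGroup δ) : p + r = btMul δ p r := rfl

variable {δ} in
def mk (u v : F) : BTGroup δ := (u, v)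

def fst : BTGroup δ →+ F where
  toFun p := Prod.fst (α := F) (β := F) p
  map_zero' := rfl
  map_add' _ _ := rfl

variable {δ}

theorem fst_mk (u v : F) : fst δ (mk u v) = u := rfl

theorem mk_zero_zero : (mk 0 0 : BTGroup δ) = 0 := rfl

variable [Module (ZMod 2) F]

theorem two_nsmul_eq (p : BTGroup δ) : 2 • p = mk 0 (fst δ p ^ 2 * δ) := by
  rw [two_nsmul, add_def]
  simp only [btMul, ZModModule.add_self, zero_add, sq]
  rfl

theorem four_nsmul_eq_zero (p : BTGroup δ) : 4 • p = 0 := by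
  rw [show 4 = 2 * 2 from rfl, mul_nsmul, two_nsmul_eq, two_nsmul_eq, fst_mk, zero_pow two_ne_zero, zero_mul, mk_zero_zero]

theorem two_nsmul_eq_zero_iff (hδ : δ ≠ 0) (p : BTGroup δ) : 2 • p = 0 ↔ fst δ p = 0 := by
  rw [two_nsmul_eq]
  change ((0 : F), fst δ p ^ 2 * δ) = ((0 : F), (0 : F)) ↔ _
  simp [hδ]

instance : Module (ZMod 4) (BTGroup δ) := AddCommGroup.zmodModule four_nsmul_eq_zero

theorem fst_smul (a : ZMod 4) (p : BTGroup δ) : fst δ (a • p) = (a.val : ZMod 2) • fst δ p := by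
  rw [Nat.cast_smul_eq_nsmul]
  exact map_nsmul (fst δ) a.val p

instance [Finite F] : Finite (BTGroup δ) := inferInstanceAs (Finite (F × F))

section Family

variable {ι : Type*} [Fintype ι] (δ) (b : ι → F)

def ofFamily : (ι → ZMod 4) →ₗ[ZMod 4] BTGroup δ :=
  Fintype.linearCombination (ZMod 4) fun i => mk (b i) 0

theorem fst_ofFamily (a : ι → ZMod 4) :
    fst δ (ofFamily δ b a) = ∑ i, ((a i).val : ZMod 2) • b i := by
  simp only [ofFamily, Fintype.linearCombination_apply, map_sum, fst_smul, fst_mk]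

variable {δ b}

theorem ofFamily_injective (hδ : δ ≠ 0) (hb : LinearIndependent (ZMod 2) b) :
    Function.Injective (ofFamily δ b) := by
  have even_of_fst_eq_zero (a : ι → ZMod 4) (ha : fst δ (ofFamily δ b a) = 0) (i : ι) :
      ((a i).val : ZMod 2) = 0 :=
    Fintype.linearIndependent_iff.mp hb _ (by rwa [fst_ofFamily] at ha) i
  rw [← LinearMap.ker_eq_bot, LinearMap.ker_eq_bot']
  intro a ha
  choose c hc using fun i ↦
    ZMod.four_exists_eq_two_nsmul _ (even_of_fst_eq_zero a (by rw [ha, map_zero]) i)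
  obtain rfl : a = 2 • c := funext hc
  rw [map_nsmul, two_nsmul_eq_zero_iff hδ] at ha
  exact funext fun i ↦ (ZMod.four_two_nsmul_eq_zero_iff _).2 (even_of_fst_eq_zero c ha i)

theorem ofFamily_bijective [Finite F] (hδ : δ ≠ 0) (b : Module.Basis ι (ZMod 2) F) :
    Function.Bijective (ofFamily δ b) := by
  refine (Nat.bijective_iff_injective_and_card _).2 ⟨ofFamily_injective hδ b.linearIndependent, ?_⟩
  have : Fintype F := Fintype.ofFinite F
  have hF : Nat.card F = 2 ^ Fintype.card ι := by
    rw [Nat.card_eq_fintype_card, Module.card_fintype b, ZMod.card]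
  change _ = Nat.card (F × F)
  rw [Nat.card_prod, hF, Nat.card_fun, Nat.card_zmod, Nat.card_eq_fintype_card, ← mul_pow]
  rfl

end Family

end BTGroup

theorem stmt_10_general (e : ℕ) (F : Type*) [Field F] [Fintype F]
    (hF : Fintype.card F = 2 ^ (2 * e + 1)) (δ : F) (hδ : δ ≠ 0) :
    (∀ p r : F × F, btMul δ p r = btMul δ r p) ∧
      ∃ φ : F × F ≃ (Fin (2 * e + 1) → ZMod 4),
        ∀ p r : F × F, φ (btMul δ p r) = φ p + φ r := by
  refine ⟨btMul_comm δ, ?_⟩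
  have : CharP F 2 := charP_of_card_eq_prime_pow hF
  let := ZMod.algebra F 2
  have hrank : Module.finrank (ZMod 2) F = 2 * e + 1 := by
    apply Nat.pow_right_injective le_rfl
    simp only [← hF, Module.card_eq_pow_finrank (K := ZMod 2) (V := F), ZMod.card]
  let b := (Module.finBasis (ZMod 2) F).reindex (finCongr hrank)
  let ψ := LinearEquiv.ofBijective _ (BTGroup.ofFamily_bijective hδ b)
  exact ⟨ψ.symm.toEquiv, fun p r ↦ ψ.symm.map_add p r⟩

/-- For `q = 2^(2e+1)` and `δ ∈ F_q` nonzero, the group `G = F_q × F_q` with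
operation `(u,v)·(s,t) = (u+s, t+v+suδ)` is abelian and isomorphic to
`(ℤ/4ℤ)^(2e+1)`. -/
theorem stmt_10 (e : ℕ) (he : 1 ≤ e) (F : Type*) [Field F] [Fintype F]
    (hF : Fintype.card F = 2 ^ (2 * e + 1)) (δ : F) (hδ : δ ≠ 0) :
    (∀ p r : F × F, btMul δ p r = btMul δ r p) ∧
      ∃ φ : F × F ≃ (Fin (2 * e + 1) → ZMod 4),
        ∀ p r : F × F, φ (btMul δ p r) = φ p + φ r :=
  stmt_10_general e F hF δ hδ
end

section
/- Let q = 2^(2e+1) with e ≥ 1 and σ = 2^(e+1). Let O = {(1, t, t^σ) : t ∈ F_q} be the translation oval D_σ in PG(2,q) with nucleus N = (0,1,0), and let C be a nondegenerate conic given by a_1 x^2 + a_2 y^2 + a_3 z^2 + xz = 0 with a_2 ≠ 0 and a_3 ≠ 0 (so that C also has nucleus N). Then the number of t ∈ F_q satisfying a_1 + a_2 t^2 + a_3 t^(2σ) + t^σ = 0 is at most 4. -/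
open Polynomial

/-- Intersection of the translation oval `D_σ = {(1,t,t^σ)}` with a
nondegenerate conic `a₁x² + a₂y² + a₃z² + xz = 0` (`a₂ ≠ 0`, `a₃ ≠ 0`) sharing
the nucleus `(0,1,0)`: the number of `t ∈ F_q` with
`a₁ + a₂t² + a₃t^(2σ) + t^σ = 0` is at most 4. -/
theorem stmt_13 (e : ℕ) (he : 1 ≤ e) (F : Type*) [Field F] [Fintype F]
    (hF : Fintype.card F = 2 ^ (2 * e + 1)) (a₁ a₂ a₃ : F)
    (ha₂ : a₂ ≠ 0) (ha₃ : a₃ ≠ 0) :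
    {t : F | a₁ + a₂ * t ^ 2 + a₃ * t ^ (2 * 2 ^ (e + 1)) + t ^ (2 ^ (e + 1))
      = 0}.ncard ≤ 4 := by
  classical
  -- characteristic 2
  have hprime : (ringChar F).Prime := CharP.char_is_prime F _
  obtain ⟨n, hn, hcard⟩ := FiniteField.card F (ringChar F)
  have hp2 : ringChar F = 2 := by
    have hdvd : ringChar F ∣ 2 ^ (2 * e + 1) := by
      rw [← hF, hcard]; exact dvd_pow_self _ (by positivity)
    have := (Nat.Prime.dvd_of_dvd_pow hprime hdvd)
    exact (Nat.prime_dvd_prime_iff_eq hprime Nat.prime_two).mp this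
  haveI : CharP F 2 := hp2 ▸ ringChar.charP F
  haveI : Fact (Nat.Prime 2) := ⟨Nat.prime_two⟩
  have htwo : (2 : F) = 0 := by
    have := CharP.cast_eq_zero F 2; exact_mod_cast this
  have hq : ∀ x : F, x ^ (2 ^ (2 * e + 1)) = x := fun x => by
    rw [← hF]; exact FiniteField.pow_card x
  set c : ℕ := 2 ^ e with hc
  set A := a₁ ^ c with hA
  set B := a₂ ^ c with hB
  set D := a₃ ^ c with hD
  -- the auxiliary quartic polynomial
  set P : F[X] := C (a₃ * D ^ 2) * X ^ 4 + C (a₂ * B ^ 2 + a₃ + B * D) * X ^ 2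
      + C B * X + C (B ^ 2 * a₁ + a₃ * A ^ 2 + A * B) with hP
  have hPne : P ≠ 0 := by
    intro h0
    have h4 : P.coeff 4 = a₃ * D ^ 2 := by
      rw [hP]
      simp only [coeff_add, coeff_C_mul, coeff_X_pow, coeff_X, coeff_C]
      norm_num
    rw [h0] at h4
    exact (mul_ne_zero ha₃ (pow_ne_zero _ (pow_ne_zero _ ha₃))) h4.symm
  have hdeg : P.natDegree ≤ 4 := by
    rw [hP]
    compute_degree
  -- every solution is a root of P
  have hsub : {t : F | a₁ + a₂ * t ^ 2 + a₃ * t ^ (2 * 2 ^ (e + 1)) + t ^ (2 ^ (e + 1))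
      = 0} ⊆ (P.roots.toFinset : Set F) := by
    intro t ht
    simp only [Set.mem_setOf_eq] at ht
    set s := t ^ (2 ^ (e + 1)) with hs
    have hE : a₁ + a₂ * t ^ 2 + a₃ * s ^ 2 + s = 0 := by
      rw [hs, ← pow_mul, mul_comm (2 ^ (e + 1)) 2]
      exact ht
    -- raise to the power 2^e
    have hE' : A + B * s + D * t ^ 2 + t = 0 := by
      have h0 : (a₁ + a₂ * t ^ 2 + a₃ * s ^ 2 + s) ^ c = 0 := by
        rw [hE]; exact zero_pow (by positivity)
      rw [hc, add_pow_char_pow (p := 2), add_pow_char_pow (p := 2),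
        add_pow_char_pow (p := 2), mul_pow, mul_pow] at h0
      have e1 : (t ^ 2) ^ (2 : ℕ) ^ e = s := by
        rw [hs, ← pow_mul]
        congr 1
        rw [pow_succ]
        ring
      have e2 : (s ^ 2) ^ (2 : ℕ) ^ e = t ^ 2 := by
        rw [hs, ← pow_mul, ← pow_mul, show 2 ^ (e + 1) * (2 * 2 ^ e)
            = 2 ^ (2 * e + 1) * 2 by
          rw [show 2 * 2 ^ e = 2 ^ (e + 1) by rw [pow_succ]; ring,
            ← pow_add, ← pow_succ]; congr 1; omega]
        rw [pow_mul, hq]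
      have e3 : s ^ (2 : ℕ) ^ e = t := by
        rw [hs, ← pow_mul, show 2 ^ (e + 1) * 2 ^ e = 2 ^ (2 * e + 1) by
          rw [← pow_add]; congr 1; omega, hq]
      rw [e1, e2, e3] at h0
      rw [hA, hB, hD, hc]
      exact h0
    have hBs : B * s = A + D * t ^ 2 + t := by
      linear_combination hE' - (A + D * t ^ 2 + t) * htwo
    have hBs2 : B ^ 2 * s ^ 2 = A ^ 2 + D ^ 2 * t ^ 4 + t ^ 2 := by
      calc B ^ 2 * s ^ 2 = (B * s) ^ 2 := by ring
        _ = (A + D * t ^ 2 + t) ^ 2 := by rw [hBs]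
        _ = A ^ 2 + D ^ 2 * t ^ 4 + t ^ 2 := by
            rw [CharTwo.add_sq, CharTwo.add_sq]; ring
    have key : a₃ * D ^ 2 * t ^ 4 + (a₂ * B ^ 2 + a₃ + B * D) * t ^ 2 + B * t
        + (B ^ 2 * a₁ + a₃ * A ^ 2 + A * B) = 0 := by
      linear_combination B ^ 2 * hE + a₃ * hBs2 + B * hBs +
        (a₃ * D ^ 2 * t ^ 4 + a₃ * t ^ 2 + B * D * t ^ 2 + B * t + a₃ * A ^ 2
          + A * B - a₃ * B ^ 2 * s ^ 2 - B ^ 2 * s) * htwo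
    have hroot : P.IsRoot t := by
      simp only [hP, IsRoot, eval_add, eval_mul, eval_C, eval_pow, eval_X]
      linear_combination key
    exact Finset.mem_coe.mpr (Multiset.mem_toFinset.mpr
      ((mem_roots hPne).mpr hroot))
  calc {t : F | a₁ + a₂ * t ^ 2 + a₃ * t ^ (2 * 2 ^ (e + 1)) + t ^ (2 ^ (e + 1))
      = 0}.ncard ≤ (P.roots.toFinset : Set F).ncard :=
        Set.ncard_le_ncard hsub (Set.Finite.ofFinset _ (fun x => Iff.rfl))
    _ = P.roots.toFinset.card := Set.ncard_coe_finset _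
    _ ≤ Multiset.card P.roots := P.roots.toFinset_card_le
    _ ≤ P.natDegree := P.card_roots'
    _ ≤ 4 := hdeg
end

section
/- Let q = 2^(2e+1) with e ≥ 1 and σ = 2^(e+1), and let a_1, a_2, a_3 ∈ F_q with a_2 ≠ 0 and a_3 = 0. Then the equation a_1 + a_2 t^2 + t^σ = 0 has at most 2 solutions t ∈ F_q. -/
/-- For `q = 2^(2e+1)`, `σ = 2^(e+1)`, `a₂ ≠ 0` and `a₃ = 0`, the equation
`a₁ + a₂t² + t^σ = 0` has at most 2 solutions `t ∈ F_q`. -/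
theorem stmt_14 (e : ℕ) (he : 1 ≤ e) (F : Type*) [Field F] [Fintype F]
    (hF : Fintype.card F = 2 ^ (2 * e + 1)) (a₁ a₂ : F) (ha₂ : a₂ ≠ 0) :
    {t : F | a₁ + a₂ * t ^ 2 + t ^ (2 ^ (e + 1)) = 0}.ncard ≤ 2 := by
  classical
  have hchar : CharP F 2 := by
    have h := ringChar.charP F
    have hp : (ringChar F).Prime := CharP.char_is_prime F (ringChar F)
    obtain ⟨n, hn⟩ := FiniteField.card F (ringChar F)
    rw [hF] at hn
    have hdvd : ringChar F ∣ 2 :=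
      hp.dvd_of_dvd_pow (hn.2 ▸ dvd_pow_self _ (by positivity : (n:ℕ) ≠ 0))
    have : ringChar F = 2 := (Nat.prime_dvd_prime_iff_eq hp Nat.prime_two).mp hdvd
    rwa [this] at h
  haveI := hchar
  haveI : ExpChar F 2 := ExpChar.prime Nat.prime_two
  set σ := 2 ^ (e + 1) with hσ
  set c₂ : F := a₂ ^ σ * a₂ ^ 2 with hc₂
  set c₀ : F := a₁ ^ σ + a₂ ^ σ * a₁ ^ 2 with hc₀
  set P : Polynomial F := Polynomial.C c₂ * Polynomial.X ^ 2 + Polynomial.X + Polynomial.C c₀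
    with hP
  have hc₂ne : c₂ ≠ 0 := mul_ne_zero (pow_ne_zero _ ha₂) (pow_ne_zero _ ha₂)
  have hdeg : P.natDegree = 2 := by
    rw [hP]
    compute_degree!
  have hPne : P ≠ 0 := fun h => by simp [h] at hdeg
  set S : Set F := {t : F | a₁ + a₂ * t ^ 2 + t ^ σ = 0} with hS
  have hroot : ∀ t ∈ S, P.IsRoot (t ^ 2) := by
    intro t ht
    have h : a₁ + a₂ * t ^ 2 + t ^ σ = 0 := ht
    have ht1 : t ^ σ = a₁ + a₂ * t ^ 2 := by
      linear_combination h - CharTwo.add_self_eq_zero (a₁ + a₂ * t ^ 2)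
    have h1 : (t ^ σ) ^ σ = t ^ 2 := by
      rw [← pow_mul, hσ, ← pow_add]
      have : (e + 1) + (e + 1) = (2 * e + 1) + 1 := by ring
      rw [this, pow_succ, pow_mul, ← hF, FiniteField.pow_card]
    have hs1 : (t ^ 2) ^ σ = (t ^ σ) ^ 2 := by
      rw [← pow_mul, ← pow_mul, mul_comm]
    have hs2 : (t ^ σ) ^ 2 = a₁ ^ 2 + a₂ ^ 2 * (t ^ 2) ^ 2 := by
      rw [ht1, add_pow_char, mul_pow]
    have hs3 : (t ^ σ) ^ σ = a₁ ^ σ + a₂ ^ σ * (t ^ 2) ^ σ := by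
      rw [ht1, hσ, add_pow_char_pow, mul_pow]
    have h2 : t ^ 2 = a₁ ^ σ + a₂ ^ σ * (a₁ ^ 2 + a₂ ^ 2 * (t ^ 2) ^ 2) := by
      calc t ^ 2 = (t ^ σ) ^ σ := h1.symm
      _ = a₁ ^ σ + a₂ ^ σ * (t ^ 2) ^ σ := hs3
      _ = a₁ ^ σ + a₂ ^ σ * (a₁ ^ 2 + a₂ ^ 2 * (t ^ 2) ^ 2) := by rw [hs1, hs2]
    have key : c₂ * (t ^ 2) ^ 2 + t ^ 2 + c₀ = 0 := by
      rw [hc₂, hc₀]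
      linear_combination h2 +
        CharTwo.add_self_eq_zero (a₂ ^ σ * a₂ ^ 2 * (t ^ 2) ^ 2 +
          (a₁ ^ σ + a₂ ^ σ * a₁ ^ 2))
    simpa [hP, Polynomial.IsRoot] using key
  have hinj : Function.Injective (fun t : F => t ^ 2) := by
    intro x y hxy
    exact frobenius_inj F 2 (by simpa [frobenius_def] using hxy)
  have himg : (fun t : F => t ^ 2) '' S ⊆ ↑P.roots.toFinset := by
    rintro x ⟨t, ht, rfl⟩
    simp only [Multiset.mem_toFinset, Finset.mem_coe]
    rw [Polynomial.mem_roots hPne]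
    exact hroot t ht
  have h1 : S.ncard = ((fun t : F => t ^ 2) '' S).ncard :=
    (Set.ncard_image_of_injective S hinj).symm
  have h2 : ((fun t : F => t ^ 2) '' S).ncard ≤ P.roots.toFinset.card := by
    rw [← Set.ncard_coe_finset]
    exact Set.ncard_le_ncard himg (P.roots.toFinset : Finset F).finite_toSet
  have h3 : P.roots.toFinset.card ≤ 2 := by
    calc P.roots.toFinset.card ≤ Multiset.card P.roots := P.roots.toFinset_card_le
    _ ≤ P.natDegree := P.card_roots'
    _ = 2 := hdeg
  omega
end

section
/- Let q = 2^(2e+1) with e ≥ 1, σ = 2^(e+1), and z_2 ∈ F_q nonzero. Then the set of solutions (s,t) ∈ F_q × F_q of s^(σ+2) + t^σ + st + z_2 = 0 equals {( z_2^(1-σ/2) u^σ / (1 + u + u^σ), z_2^(σ/2)(1 + u^σ)/(1 + u + u^σ) ) : u ∈ F_q} ∪ {( z_2^(1-σ/2), z_2^(σ/2) )}, where σ/2 = 2^e. In particular the equation has exactly q + 1 solutions. -/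
/-!
Write σ for the automorphism x ↦ x ^ 2 ^ (e + 1) of F, so that σ (σ x) = x ^ 2, and
τ = σ⁻¹ (x ↦ x ^ 2 ^ e). Rescaling (s, t) ↦ (z τ(z)⁻¹ s, τ(z) t) turns the left-hand side
σ s · s² + σ t + s t + z into z times its value at z = 1, so it suffices to treat z = 1.
There, a solution (x, y) other than (1, 1) has x + y ≠ 0 and is the image of
u = τ(x / (x + y)) = (y + 1) / (x + y). The two coordinates of the parametrisation add up to
1 / (1 + u + σ u), which makes it injective and keeps (1, 1) out of its range.
-/

open Set

namespace SuzukiTits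

variable {F : Type*} [Field F] (σ : F ≃+* F)

def curve (z : F) : Set (F × F) := {p | σ p.1 * p.1 ^ 2 + σ p.2 + p.1 * p.2 + z = 0}

def param (u : F) : F × F := (σ u / (1 + u + σ u), (1 + σ u) / (1 + u + σ u))

-- `σ.symm z` stands for the paper's `z ^ (σ / 2)`.
def scale (z : F) (p : F × F) : F × F := (z * (σ.symm z)⁻¹ * p.1, σ.symm z * p.2)

variable {σ}

theorem scale_bijective {z : F} (hz : z ≠ 0) : Function.Bijective (scale σ z) := by
  have hτ : σ.symm z ≠ 0 := by simpa using hz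
  refine ⟨fun p q hpq => ?_, fun p => ⟨(z⁻¹ * σ.symm z * p.1, (σ.symm z)⁻¹ * p.2), ?_⟩⟩
  · simp only [scale, Prod.mk.injEq] at hpq
    exact Prod.ext (by simpa [hz, hτ] using hpq.1) (by simpa [hτ] using hpq.2)
  · simp only [scale]
    field_simp

theorem scale_mem_curve_iff (hσ : ∀ x, σ (σ x) = x ^ 2) {z : F} (hz : z ≠ 0) {p : F × F} :
    scale σ z p ∈ curve σ z ↔ p ∈ curve σ 1 := by
  have hτ : σ.symm z ≠ 0 := by simpa using hz
  have hστ : σ (σ.symm z) = z := σ.apply_symm_apply z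
  have hσz : σ z = σ.symm z ^ 2 := by rw [← hσ, hστ]
  have hscale : σ (scale σ z p).1 * (scale σ z p).1 ^ 2 + σ (scale σ z p).2
      + (scale σ z p).1 * (scale σ z p).2 + z
      = z * (σ p.1 * p.1 ^ 2 + σ p.2 + p.1 * p.2 + 1) := by
    simp only [scale, map_mul, map_inv₀, hσz, hστ]
    field_simp
  simp only [curve, mem_ofPred_eq, hscale, mul_eq_zero, hz, false_or]

theorem curve_eq_image_scale (hσ : ∀ x, σ (σ x) = x ^ 2) {z : F} (hz : z ≠ 0) :
    curve σ z = scale σ z '' curve σ 1 := by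
  rw [← (scale_bijective hz).2.image_preimage (curve σ z)]
  congr 1
  ext p
  exact scale_mem_curve_iff hσ hz

variable [CharP F 2]

theorem one_add_add_apply_ne_zero (hσ : ∀ x, σ (σ x) = x ^ 2) (u : F) : 1 + u + σ u ≠ 0 := by
  intro h
  have hσu : σ u = 1 + u := by grind
  have hu : u ^ 2 = u := by rw [← hσ, hσu, map_add, map_one, hσu]; grind
  rcases (show u = 0 ∨ u = 1 by grind) with rfl | rfl <;> grind

theorem param_mem_curve_one (hσ : ∀ x, σ (σ x) = x ^ 2) (u : F) : param σ u ∈ curve σ 1 := by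
  have hD := one_add_add_apply_ne_zero hσ u
  have hσD : 1 + σ u + u ^ 2 ≠ 0 := by simpa [hσ] using (map_ne_zero σ).mpr hD
  simp only [curve, param, mem_ofPred_eq, map_div₀, map_add, map_one, hσ]
  field_simp
  grind

theorem fst_add_snd_param (u : F) : (param σ u).1 + (param σ u).2 = (1 + u + σ u)⁻¹ := by
  rw [param, ← add_div, add_comm, add_assoc, CharTwo.add_self_eq_zero, add_zero, one_div]

theorem param_injective (hσ : ∀ x, σ (σ x) = x ^ 2) : Function.Injective (param σ) := by
  intro u v huv
  have hD : 1 + u + σ u = 1 + v + σ v := by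
    simpa [fst_add_snd_param] using congrArg (fun p => p.1 + p.2) huv
  have hσ_eq : σ u = σ v := by
    simpa [param, hD, one_add_add_apply_ne_zero hσ v] using congrArg Prod.fst huv
  exact σ.injective hσ_eq

theorem one_one_notMem_range_param (hσ : ∀ x, σ (σ x) = x ^ 2) :
    ((1, 1) : F × F) ∉ range (param σ) := by
  rintro ⟨u, hu⟩
  have h := fst_add_snd_param (σ := σ) u
  rw [hu, CharTwo.add_self_eq_zero, eq_comm, inv_eq_zero] at h
  exact one_add_add_apply_ne_zero hσ u h

theorem exists_param_eq (hσ : ∀ x, σ (σ x) = x ^ 2) {p : F × F} (hp : p ∈ curve σ 1)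
    (hne : p ≠ (1, 1)) : ∃ u, param σ u = p := by
  obtain ⟨x, y⟩ := p
  have h1 : σ x * x ^ 2 + σ y + x * y + 1 = 0 := hp
  have h2 : σ x ^ 2 * x ^ 2 + y ^ 2 + σ x * σ y + 1 = 0 := by
    simpa [hσ, mul_comm] using congrArg σ h1
  clear hσ
  have hxy : x + y ≠ 0 := by
    intro h
    have hyx : y = x := by grind
    rw [hyx] at h1 hne
    have hfactor : (x + 1) ^ 2 * (σ x + 1) = 0 := by grind
    have hx : x = 1 := by
      rcases mul_eq_zero.mp hfactor with h | h
      · grind [pow_eq_zero_iff]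
      · exact σ.injective (by grind)
    exact hne (by rw [hx])
  -- `(y + x σ x) h1 + x h2`, in characteristic 2
  have hkey : σ x * x + σ y * y + x + y = 0 := by grind
  set u := σ.symm (x / (x + y))
  have hσu : σ u = x / (x + y) := σ.apply_symm_apply _
  have hu : u = (y + 1) / (x + y) := σ.injective (by
    have : σ x + σ y ≠ 0 := by simpa using (map_ne_zero σ).mpr hxy
    rw [hσu, map_div₀, map_add, map_add, map_one]
    field_simp
    grind)
  have hD : 1 + u + σ u = (x + y)⁻¹ := by rw [hσu, hu]; field_simp; grind
  refine ⟨u, ?_⟩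
  rw [param, hD, hσu, div_inv_eq_mul, div_inv_eq_mul, Prod.mk.injEq]
  constructor
  · field_simp
  · field_simp; grind

theorem curve_one_eq (hσ : ∀ x, σ (σ x) = x ^ 2) :
    curve σ 1 = range (param σ) ∪ {(1, 1)} := by
  ext p
  refine ⟨fun hp => ?_, ?_⟩
  · by_cases hne : p = (1, 1)
    · exact Or.inr hne
    · exact Or.inl (exists_param_eq hσ hp hne)
  · rintro (⟨u, rfl⟩ | rfl)
    · exact param_mem_curve_one hσ u
    · simp only [curve, mem_ofPred_eq, map_one]
      grind

theorem curve_eq (hσ : ∀ x, σ (σ x) = x ^ 2) {z : F} (hz : z ≠ 0) :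
    curve σ z = range (scale σ z ∘ param σ) ∪ {scale σ z (1, 1)} := by
  rw [curve_eq_image_scale hσ hz, curve_one_eq hσ, image_union, image_singleton, range_comp]

theorem ncard_curve [Finite F] (hσ : ∀ x, σ (σ x) = x ^ 2) {z : F} (hz : z ≠ 0) :
    (curve σ z).ncard = Nat.card F + 1 := by
  rw [curve_eq_image_scale hσ hz, ncard_image_of_injective _ (scale_bijective hz).1,
    curve_one_eq hσ, union_singleton, ncard_insert_of_notMem (one_one_notMem_range_param hσ),
    ← image_univ, ncard_image_of_injective _ (param_injective hσ), ncard_univ]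

end SuzukiTits

open SuzukiTits

theorem stmt_15_general (e : ℕ) (F : Type*) [Field F] [Fintype F]
    (hF : Fintype.card F = 2 ^ (2 * e + 1)) (z₂ : F) (hz₂ : z₂ ≠ 0) :
    {p : F × F |
        p.1 ^ (2 ^ (e + 1) + 2) + p.2 ^ (2 ^ (e + 1)) + p.1 * p.2 + z₂ = 0} =
      (Set.range fun u : F =>
        ((z₂ * (z₂ ^ (2 ^ e))⁻¹ * u ^ (2 ^ (e + 1))) /
            (1 + u + u ^ (2 ^ (e + 1))),
         (z₂ ^ (2 ^ e) * (1 + u ^ (2 ^ (e + 1)))) /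
            (1 + u + u ^ (2 ^ (e + 1))))) ∪
        {(z₂ * (z₂ ^ (2 ^ e))⁻¹, z₂ ^ (2 ^ e))} ∧
    {p : F × F |
        p.1 ^ (2 ^ (e + 1) + 2) + p.2 ^ (2 ^ (e + 1)) + p.1 * p.2 + z₂
          = 0}.ncard = 2 ^ (2 * e + 1) + 1 := by
  have : CharP F 2 := charP_of_card_eq_prime_pow hF
  have hq (x : F) : x ^ 2 ^ (2 * e + 1) = x := by rw [← hF, FiniteField.pow_card]
  let σ := iterateFrobeniusEquiv F 2 (e + 1)
  have hσ (x : F) : σ (σ x) = x ^ 2 := by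
    rw [iterateFrobeniusEquiv_def, iterateFrobeniusEquiv_def, ← pow_mul, ← pow_add,
      show e + 1 + (e + 1) = 2 * e + 1 + 1 by ring, pow_succ, pow_mul, hq]
  have hτ : σ.symm z₂ = z₂ ^ 2 ^ e := by
    rw [RingEquiv.symm_apply_eq, iterateFrobeniusEquiv_def, ← pow_mul, ← pow_add,
      show e + (e + 1) = 2 * e + 1 by ring, hq]
  have hcurve : {p : F × F | p.1 ^ (2 ^ (e + 1) + 2) + p.2 ^ (2 ^ (e + 1)) + p.1 * p.2 + z₂ = 0}
      = curve σ z₂ := by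
    ext p
    rw [curve, mem_ofPred_eq, mem_ofPred_eq, pow_add]
    rfl
  rw [hcurve, ncard_curve hσ hz₂, Nat.card_eq_fintype_card, hF, curve_eq hσ hz₂]
  refine ⟨?_, rfl⟩
  congr 2
  · funext u
    rw [Function.comp_apply, scale, param, hτ, iterateFrobeniusEquiv_def, mul_div_assoc,
      mul_div_assoc]
  · rw [scale, hτ, mul_one, mul_one]

/-- For `q = 2^(2e+1)`, `σ = 2^(e+1)`, `z₂ ∈ F_q` nonzero: the solution set of
`s^(σ+2) + t^σ + st + z₂ = 0` is the stated parameterized set, and has exactly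
`q + 1` elements. -/
theorem stmt_15 (e : ℕ) (he : 1 ≤ e) (F : Type*) [Field F] [Fintype F]
    (hF : Fintype.card F = 2 ^ (2 * e + 1)) (z₂ : F) (hz₂ : z₂ ≠ 0) :
    {p : F × F |
        p.1 ^ (2 ^ (e + 1) + 2) + p.2 ^ (2 ^ (e + 1)) + p.1 * p.2 + z₂ = 0} =
      (Set.range fun u : F =>
        ((z₂ * (z₂ ^ (2 ^ e))⁻¹ * u ^ (2 ^ (e + 1))) /
            (1 + u + u ^ (2 ^ (e + 1))),
         (z₂ ^ (2 ^ e) * (1 + u ^ (2 ^ (e + 1)))) /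
            (1 + u + u ^ (2 ^ (e + 1))))) ∪
        {(z₂ * (z₂ ^ (2 ^ e))⁻¹, z₂ ^ (2 ^ e))} ∧
    {p : F × F |
        p.1 ^ (2 ^ (e + 1) + 2) + p.2 ^ (2 ^ (e + 1)) + p.1 * p.2 + z₂
          = 0}.ncard = 2 ^ (2 * e + 1) + 1 :=
  stmt_15_general e F hF z₂ hz₂
end

section
/- Let q = 2^(2e+1) with e ≥ 1, σ = 2^(e+1), and let δ ∈ F_q with δ ≠ 0, δ ≠ 1 and absolute trace Tr_{F_q/F_2}(δ) = 1. Set a = δ^(σ-1) + 1. Then Tr_{F_q/F_2}(a^(σ+1)) = 0, and the F_2-linearized equation (a^(σ/2)+1) u^σ + a u^2 + u = 0 has exactly 4 solutions u ∈ F_q. -/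
/-!
The absolute trace `Tr` of `F = 𝔽_q`, `q = 2^(2e+1)`, is additive and Frobenius-invariant. For
`b = δ^(σ-1)` one has `b^(σ+1) = δ` because `σ² = 2q`, so `a^(σ+1) = δ + b^σ + b + 1` has trace
`1 + 0 + 1 = 0`.

The roots of `L(u) = (a^(σ/2)+1) u^σ + a u² + u` form an additive group. Besides `0` it contains
`u₀ = a^(-(σ/2+1))` and every root of `u^σ + a u² + 1`; writing `u = √z · u₀` the latter equation
becomes `z^(σ/2) + z = a^(σ+1)`. This is solvable: `z ↦ z^(σ/2) + z` has kernel `𝔽₂` since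
`gcd(e, 2e+1) = 1`, so its image has index 2, and it lies in `ker Tr`, which is proper as
`Tr δ = 1`, hence equals it. Conversely, applying `u ↦ u^σ` to `L(u) = 0` and using
`u^(σ²) = u²` shows that every root of `L` is a root of a nonzero quartic, so there are at most 4.
-/

open Finset Polynomial

namespace FiniteField

variable {F : Type*} [Field F] [Fintype F] {n e : ℕ}

theorem charP_two_of_card_eq_two_pow (hn : n ≠ 0) (hF : Fintype.card F = 2 ^ n) : CharP F 2 :=
  ringChar.of_eq <| even_card_iff_char_two.mpr <| by
    rw [hF, Nat.pow_mod]; simp [hn]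

theorem pow_two_pow_add_of_card (hF : Fintype.card F = 2 ^ n) (x : F) (j : ℕ) :
    x ^ 2 ^ (n + j) = x ^ 2 ^ j := by
  rw [pow_add, pow_mul, ← hF, pow_card]

theorem eq_zero_or_eq_one_of_pow_two_pow_eq_self (hF : Fintype.card F = 2 ^ (2 * e + 1))
    {z : F} (hz : z ^ 2 ^ e = z) : z = 0 ∨ z = 1 := by
  have h2e : z ^ 2 ^ (2 * e) = z := by rw [two_mul, pow_add, pow_mul, hz, hz]
  have hq := pow_two_pow_add_of_card hF z 0
  rw [add_zero, pow_succ, pow_mul, h2e] at hq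
  exact IsIdempotentElem.iff_eq_zero_or_one.mp (by simpa [IsIdempotentElem, ← sq] using hq)

theorem pow_two_pow_pow_two_pow_succ (hF : Fintype.card F = 2 ^ (2 * e + 1)) (x : F) :
    (x ^ 2 ^ e) ^ 2 ^ (e + 1) = x := by
  rw [← pow_mul, ← pow_add, show e + (e + 1) = 2 * e + 1 by ring, ← hF, pow_card]

theorem pow_two_pow_succ_pow_two_pow_succ (hF : Fintype.card F = 2 ^ (2 * e + 1)) (x : F) :
    (x ^ 2 ^ (e + 1)) ^ 2 ^ (e + 1) = x ^ 2 := by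
  rw [← pow_mul, show 2 ^ (e + 1) * 2 ^ (e + 1) = 2 ^ (2 * e + 1) * 2 by ring, pow_mul, ← hF,
    pow_card]

theorem pow_two_pow_succ_ne_self (hF : Fintype.card F = 2 ^ (2 * e + 1)) {δ : F}
    (hδ0 : δ ≠ 0) (hδ1 : δ ≠ 1) : δ ^ 2 ^ (e + 1) ≠ δ := by
  intro h
  have hsq := pow_two_pow_succ_pow_two_pow_succ hF δ
  rw [h, h] at hsq
  rcases IsIdempotentElem.iff_eq_zero_or_one.mp (show δ * δ = δ by rw [← sq, ← hsq]) with h | h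
  exacts [hδ0 h, hδ1 h]

theorem inv_pow_two_pow_mul_self_pow_two_pow_succ (hF : Fintype.card F = 2 ^ (2 * e + 1))
    {a : F} (ha : a ≠ 0) : (a ^ 2 ^ e * a)⁻¹ ^ 2 ^ (e + 1) = a * (a ^ 2 ^ e * a)⁻¹ ^ 2 := by
  have hB : a ^ 2 ^ e ≠ 0 := pow_ne_zero _ ha
  rw [inv_pow, inv_pow, mul_pow, mul_pow, pow_two_pow_pow_two_pow_succ hF, pow_succ,
    pow_mul]
  field_simp

end FiniteField

theorem AddSubgroup.four_le_ncard {R : Type*} [Ring R] [CharP R 2] [Finite R] (H : AddSubgroup R)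
    {x y : R} (hx : x ∈ H) (hy : y ∈ H) (hx0 : x ≠ 0) (hy0 : y ≠ 0) (hxy : x ≠ y) :
    4 ≤ (H : Set R).ncard := by
  have hsub : ({0, x, y, x + y} : Set R) ⊆ H := by
    simp [Set.insert_subset_iff, hx, hy, H.zero_mem, H.add_mem hx hy]
  refine le_trans ?_ (Set.ncard_le_ncard hsub)
  have hxy' : x + y ≠ 0 := fun h ↦ hxy (CharTwo.add_eq_zero.mp h)
  rw [Set.ncard_insert_of_notMem, Set.ncard_insert_of_notMem, Set.ncard_pair]
  all_goals simp [hxy, hx0, hy0, hx0.symm, hy0.symm, hxy'.symm]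

section CharTwo

variable {F : Type*} [Field F] [CharP F 2]

variable (F) in
def absTrace (n : ℕ) : F →+ F :=
  ∑ i ∈ range n, (iterateFrobenius F 2 i).toAddMonoidHom

theorem absTrace_apply (n : ℕ) (x : F) : absTrace F n x = ∑ i ∈ range n, x ^ 2 ^ i := by
  simp [absTrace, iterateFrobenius_def]

theorem absTrace_one_of_odd {n : ℕ} (hn : Odd n) : absTrace F n 1 = 1 := by
  obtain ⟨m, rfl⟩ := hn
  simp [absTrace_apply, CharTwo.two_eq_zero]

variable [Fintype F] {n e : ℕ}

theorem absTrace_sq (hF : Fintype.card F = 2 ^ n) (x : F) :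
    absTrace F n (x ^ 2) = absTrace F n x := by
  have hshift := (sum_range_succ' (fun i ↦ x ^ 2 ^ i) n).symm.trans (sum_range_succ _ n)
  have hwrap : x ^ 2 ^ n = x ^ 2 ^ 0 := by simpa using FiniteField.pow_two_pow_add_of_card hF x 0
  rw [hwrap, add_right_cancel_iff] at hshift
  simpa only [absTrace_apply, ← pow_mul, ← pow_succ'] using hshift

theorem absTrace_pow_two_pow (hF : Fintype.card F = 2 ^ n) (x : F) (m : ℕ) :
    absTrace F n (x ^ 2 ^ m) = absTrace F n x := by
  induction m with
  | zero => simp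
  | succ m ih => rw [pow_succ, pow_mul, absTrace_sq hF, ih]

theorem exists_pow_two_pow_add_self_eq (hF : Fintype.card F = 2 ^ (2 * e + 1)) {δ c : F}
    (hδ : absTrace F (2 * e + 1) δ ≠ 0) (hc : absTrace F (2 * e + 1) c = 0) :
    ∃ z, z ^ 2 ^ e + z = c := by
  let φ : F →+ F := (iterateFrobenius F 2 e).toAddMonoidHom + AddMonoidHom.id F
  have hφ (z : F) : φ z = z ^ 2 ^ e + z := by simp [φ, iterateFrobenius_def]
  have hker : Nat.card φ.ker ≤ 2 := by
    have hsub : (φ.ker : Set F) ⊆ {0, 1} := fun z hz ↦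
      FiniteField.eq_zero_or_eq_one_of_pow_two_pow_eq_self hF
        (CharTwo.add_eq_zero.mp ((hφ z).symm.trans hz))
    rw [← SetLike.coe_sort_coe, Nat.card_coe_set_eq]
    exact (Set.ncard_le_ncard hsub).trans (Set.ncard_insert_le _ _ |>.trans (by simp))
  have hle : φ.range ≤ (absTrace F (2 * e + 1)).ker := by
    rintro _ ⟨z, rfl⟩
    rw [AddMonoidHom.mem_ker, hφ, map_add, absTrace_pow_two_pow hF, CharTwo.add_self_eq_zero]
  have hne : (absTrace F (2 * e + 1)).ker ≠ ⊤ := fun h ↦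
    hδ (by rw [← AddMonoidHom.mem_ker, h]; exact AddSubgroup.mem_top δ)
  have hcard := AddSubgroup.card_mul_index (absTrace F (2 * e + 1)).ker
  have hidx := AddSubgroup.one_lt_index_of_ne_top hne
  have hrange := AddSubgroup.card_mul_index φ.ker
  rw [AddSubgroup.index_ker] at hrange
  obtain ⟨z, hz⟩ : c ∈ φ.range :=
    (AddSubgroup.eq_of_le_of_card_ge hle (by nlinarith)).symm ▸ hc
  exact ⟨z, (hφ z).symm.trans hz⟩

theorem absTrace_mul_inv_add_one_pow_eq_zero (hF : Fintype.card F = 2 ^ (2 * e + 1))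
    {δ : F} (hδ0 : δ ≠ 0) (hδ : absTrace F (2 * e + 1) δ = 1) :
    absTrace F (2 * e + 1) ((δ ^ 2 ^ (e + 1) * δ⁻¹ + 1) ^ (2 ^ (e + 1) + 1)) = 0 := by
  set b := δ ^ 2 ^ (e + 1) * δ⁻¹
  have hb : b ^ 2 ^ (e + 1) * b = δ := by
    simp only [b, mul_pow, FiniteField.pow_two_pow_succ_pow_two_pow_succ hF, inv_pow]
    field_simp
  have hexpand : (b + 1) ^ (2 ^ (e + 1) + 1) = δ + b ^ 2 ^ (e + 1) + b + 1 := by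
    rw [pow_succ, add_pow_char_pow, one_pow]
    linear_combination hb
  rw [hexpand, map_add, map_add, map_add, absTrace_pow_two_pow hF, hδ,
    absTrace_one_of_odd (odd_two_mul_add_one e), add_assoc 1, CharTwo.add_self_eq_zero, add_zero,
    CharTwo.add_self_eq_zero]

variable (F) in
def linearizedRoots (k : ℕ) (c a : F) : AddSubgroup F where
  carrier := {u | c * u ^ 2 ^ k + a * u ^ 2 + u = 0}
  zero_mem' := by simp
  add_mem' {u v} hu hv := by
    simp only [Set.mem_ofPred_eq, add_pow_char_pow, add_pow_char] at hu hv ⊢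
    linear_combination hu + hv
  neg_mem' := by simp [CharTwo.neg_eq]

theorem ncard_linearizedRoots_le_four (hF : Fintype.card F = 2 ^ (2 * e + 1)) {c : F}
    (hc : c ≠ 0) (a : F) : (linearizedRoots F (e + 1) c a : Set F).ncard ≤ 4 := by
  set p : F[X] := C (a ^ 2 ^ (e + 1) * a ^ 2) * X ^ 4
    + C (a ^ 2 ^ (e + 1) + c * a + c ^ 2 ^ (e + 1) * c ^ 2) * X ^ 2 + C c * X with hp_def
  have hp : p ≠ 0 := fun h ↦ hc <| by
    have := congrArg (coeff · 1) h
    simpa only [hp_def, coeff_add, coeff_C_mul, coeff_X_pow, coeff_X_one, coeff_zero,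
      Nat.reduceEqDiff, if_false, mul_zero, mul_one, zero_add] using this
  have hdeg : p.natDegree ≤ 4 := by rw [hp_def]; compute_degree
  have hsub : (linearizedRoots F (e + 1) c a : Set F) ⊆ p.rootSet F := by
    intro u (hu : c * u ^ 2 ^ (e + 1) + a * u ^ 2 + u = 0)
    have hL : c * u ^ 2 ^ (e + 1) = a * u ^ 2 + u :=
      CharTwo.add_eq_zero.mp (by linear_combination hu)
    have hLs : c ^ 2 ^ (e + 1) * u ^ 2
        = a ^ 2 ^ (e + 1) * (u ^ 2 ^ (e + 1)) ^ 2 + u ^ 2 ^ (e + 1) := by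
      have := congrArg (· ^ 2 ^ (e + 1)) hL
      simp only [mul_pow, add_pow_char_pow, FiniteField.pow_two_pow_succ_pow_two_pow_succ hF]
        at this
      rw [this, pow_right_comm]
    rw [mem_rootSet, aeval_def]
    refine ⟨hp, ?_⟩
    simp only [hp_def, eval₂_add, eval₂_mul, eval₂_C, eval₂_X_pow, eval₂_X,
      Algebra.algebraMap_self, RingHom.id_apply]
    linear_combination c ^ 2 * hLs
      + (a ^ 2 ^ (e + 1) * (c * u ^ 2 ^ (e + 1) + a * u ^ 2 + u) + c) * hL
      + (a ^ 2 ^ (e + 1) * (a * u ^ 2 + u) ^ 2 + c * (a * u ^ 2 + u) - a ^ 2 ^ (e + 1) * a * u ^ 3)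
        * (CharTwo.two_eq_zero : (2 : F) = 0)
  exact (Set.ncard_le_ncard hsub (p.rootSet_finite F)).trans ((ncard_rootSet_le p F).trans hdeg)

theorem inv_mem_linearizedRoots (hF : Fintype.card F = 2 ^ (2 * e + 1)) {a : F}
    (ha : a ≠ 0) : (a ^ 2 ^ e * a)⁻¹ ∈ linearizedRoots F (e + 1) (a ^ 2 ^ e + 1) a := by
  show (a ^ 2 ^ e + 1) * (a ^ 2 ^ e * a)⁻¹ ^ 2 ^ (e + 1) + a * (a ^ 2 ^ e * a)⁻¹ ^ 2
    + (a ^ 2 ^ e * a)⁻¹ = 0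
  have hB : a ^ 2 ^ e ≠ 0 := pow_ne_zero _ ha
  rw [inv_pow, inv_pow, mul_pow, mul_pow, FiniteField.pow_two_pow_pow_two_pow_succ hF, pow_succ,
    pow_mul]
  field_simp
  linear_combination (a ^ 2 ^ e + 1) * (CharTwo.two_eq_zero : (2 : F) = 0)

theorem mem_linearizedRoots_of_pow_add_mul_sq_add_one_eq_zero
    (hF : Fintype.card F = 2 ^ (2 * e + 1)) {a u : F}
    (hu : u ^ 2 ^ (e + 1) + a * u ^ 2 + 1 = 0) :
    u ∈ linearizedRoots F (e + 1) (a ^ 2 ^ e + 1) a := by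
  have hu' := congrArg (· ^ 2 ^ e) hu
  simp only [add_pow_char_pow, mul_pow, one_pow, zero_pow (pow_ne_zero e two_ne_zero)] at hu'
  rw [pow_right_comm, FiniteField.pow_two_pow_pow_two_pow_succ hF, pow_right_comm u 2] at hu'
  show (a ^ 2 ^ e + 1) * u ^ 2 ^ (e + 1) + a * u ^ 2 + u = 0
  linear_combination hu + hu' - (CharTwo.two_eq_zero : (2 : F) = 0)

theorem pow_add_mul_sq_add_one_eq_zero (hF : Fintype.card F = 2 ^ (2 * e + 1)) {a z : F}
    (ha : a ≠ 0) (hz : z ^ 2 ^ e + z = a ^ (2 ^ (e + 1) + 1)) :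
    (z ^ 2 ^ (2 * e) * (a ^ 2 ^ e * a)⁻¹) ^ 2 ^ (e + 1)
      + a * (z ^ 2 ^ (2 * e) * (a ^ 2 ^ e * a)⁻¹) ^ 2 + 1 = 0 := by
  have hB : a ^ 2 ^ e ≠ 0 := pow_ne_zero _ ha
  have hsqrt : (z ^ 2 ^ (2 * e)) ^ 2 = z := by
    rw [← pow_mul, ← pow_succ, ← hF, FiniteField.pow_card]
  have hzs : (z ^ 2 ^ (2 * e)) ^ 2 ^ (e + 1) = z ^ 2 ^ e := by
    rw [← pow_mul, ← pow_add, show 2 * e + (e + 1) = 2 * e + 1 + e by ring,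
      FiniteField.pow_two_pow_add_of_card hF]
  rw [mul_pow, mul_pow, hsqrt, hzs, inv_pow, inv_pow, mul_pow, mul_pow,
    FiniteField.pow_two_pow_pow_two_pow_succ hF, pow_succ 2 e, pow_mul]
  rw [pow_succ, pow_succ 2 e, pow_mul] at hz
  field_simp
  linear_combination hz + a * (a ^ 2 ^ e) ^ 2 * (CharTwo.two_eq_zero : (2 : F) = 0)

theorem four_le_ncard_linearizedRoots (hF : Fintype.card F = 2 ^ (2 * e + 1)) {a z : F}
    (ha : a ≠ 0) (hz : z ^ 2 ^ e + z = a ^ (2 ^ (e + 1) + 1)) :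
    4 ≤ (linearizedRoots F (e + 1) (a ^ 2 ^ e + 1) a : Set F).ncard := by
  have hu₁ := pow_add_mul_sq_add_one_eq_zero hF ha hz
  have hu₀ : (a ^ 2 ^ e * a)⁻¹ ^ 2 ^ (e + 1) + a * (a ^ 2 ^ e * a)⁻¹ ^ 2 + 1 = 1 := by
    rw [FiniteField.inv_pow_two_pow_mul_self_pow_two_pow_succ hF ha, CharTwo.add_self_eq_zero,
      zero_add]
  refine AddSubgroup.four_le_ncard _ (inv_mem_linearizedRoots hF ha)
    (mem_linearizedRoots_of_pow_add_mul_sq_add_one_eq_zero hF hu₁)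
    (inv_ne_zero (mul_ne_zero (pow_ne_zero _ ha) ha)) (fun h ↦ ?_) (fun h ↦ ?_)
  · rw [h] at hu₁
    simp at hu₁
  · rw [h, hu₁] at hu₀
    exact zero_ne_one hu₀

end CharTwo

theorem stmt_17_general (e : ℕ) (F : Type*) [Field F] [Fintype F]
    (hF : Fintype.card F = 2 ^ (2 * e + 1)) (δ : F) (hδ0 : δ ≠ 0) (hδ1 : δ ≠ 1)
    (hδtr : ∑ i ∈ Finset.range (2 * e + 1), δ ^ (2 ^ i) = 1)
    (a : F) (ha : a = δ ^ (2 ^ (e + 1)) * δ⁻¹ + 1) :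
    (∑ i ∈ Finset.range (2 * e + 1), (a ^ (2 ^ (e + 1) + 1)) ^ (2 ^ i) = 0) ∧
    {u : F | (a ^ (2 ^ e) + 1) * u ^ (2 ^ (e + 1)) + a * u ^ 2 + u = 0}.ncard
      = 4 := by
  have := FiniteField.charP_two_of_card_eq_two_pow (Nat.succ_ne_zero _) hF
  rw [← absTrace_apply] at hδtr ⊢
  have htrace : absTrace F (2 * e + 1) (a ^ (2 ^ (e + 1) + 1)) = 0 :=
    ha ▸ absTrace_mul_inv_add_one_pow_eq_zero hF hδ0 hδtr
  have hb0 : δ ^ 2 ^ (e + 1) * δ⁻¹ ≠ 0 := mul_ne_zero (pow_ne_zero _ hδ0) (inv_ne_zero hδ0)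
  have ha0 : a ≠ 0 := by
    rw [ha, Ne, CharTwo.add_eq_zero, mul_inv_eq_one₀ hδ0]
    exact FiniteField.pow_two_pow_succ_ne_self hF hδ0 hδ1
  have hc : a ^ 2 ^ e + 1 ≠ 0 := by
    rw [ha, add_pow_char_pow, one_pow, add_assoc, CharTwo.add_self_eq_zero, add_zero]
    exact pow_ne_zero _ hb0
  obtain ⟨z, hz⟩ := exists_pow_two_pow_add_self_eq hF (hδtr ▸ one_ne_zero) htrace
  exact ⟨htrace, le_antisymm (ncard_linearizedRoots_le_four hF hc a)
    (four_le_ncard_linearizedRoots hF ha0 hz)⟩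

/-- For `q = 2^(2e+1)`, `σ = 2^(e+1)`, `δ ∈ F_q` with `δ ≠ 0`, `δ ≠ 1` and
absolute trace 1, set `a = δ^(σ-1) + 1`. Then `Tr(a^(σ+1)) = 0`, and the
equation `(a^(σ/2)+1)u^σ + au² + u = 0` has exactly 4 solutions in `F_q`. -/
theorem stmt_17 (e : ℕ) (he : 1 ≤ e) (F : Type*) [Field F] [Fintype F]
    (hF : Fintype.card F = 2 ^ (2 * e + 1)) (δ : F) (hδ0 : δ ≠ 0) (hδ1 : δ ≠ 1)
    (hδtr : ∑ i ∈ Finset.range (2 * e + 1), δ ^ (2 ^ i) = 1)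
    (a : F) (ha : a = δ ^ (2 ^ (e + 1)) * δ⁻¹ + 1) :
    (∑ i ∈ Finset.range (2 * e + 1), (a ^ (2 ^ (e + 1) + 1)) ^ (2 ^ i) = 0) ∧
    {u : F | (a ^ (2 ^ e) + 1) * u ^ (2 ^ (e + 1)) + a * u ^ 2 + u = 0}.ncard
      = 4 :=
  stmt_17_general e F hF δ hδ0 hδ1 hδtr a ha
end

section
/- Let q = 2^(2e+1) with e ≥ 1, σ = 2^(e+1), and δ ∈ F_q with absolute trace 1. The system of equations over F_q in unknowns (s,t): s^2 + δ t^2 + st = δ and s^(σ+2) + t^σ + st = 1 (i.e., y_1 = 0, a_1 = δ, z_2 = 1) has exactly 3 solutions. -/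
/-!
Write `τ x = x ^ σ`. In a field of order `2 ^ (2e+1)` this is a ring endomorphism with
`τ (τ x) = x ^ 2`, and the second equation says that `(s, t)` lies on the oval
`τ s * s ^ 2 + τ t + s * t = 1`. That oval is the point `(1, 1)` together with the rational
curve `u ↦ (τ u, τ u + 1) / (τ u + u + 1)`, which is injective with inverse
`(s, t) ↦ (t + 1) / (s + t)`. A point of the curve lies on the conic exactly when
`τ u = δ * u ^ 2`; applying `τ` once more shows that the nonzero solutions satisfy
`u ^ 2 = (τ δ * δ ^ 2)⁻¹`, and since squaring is bijective this has exactly one nonzero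
solution. Together with `u = 0` and the point `(1, 1)`, which is on the conic as well, this gives
three solutions.
-/

open Function

section TitsOval

variable {F : Type*} [Field F]

def conic (δ : F) : Set (F × F) := {p | p.1 ^ 2 + δ * p.2 ^ 2 + p.1 * p.2 = δ}

/-- For `τ x = x ^ σ` this is the affine oval `s ^ (σ + 2) + t ^ σ + s * t = 1`. -/
def titsOval (τ : F →+* F) : Set (F × F) := {p | τ p.1 * p.1 ^ 2 + τ p.2 + p.1 * p.2 = 1}

def titsOvalParam (τ : F →+* F) (u : F) : F × F :=
  (τ u / (τ u + u + 1), (τ u + 1) / (τ u + u + 1))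

variable [CharP F 2] {τ : F →+* F}

theorem map_add_add_one_ne_zero (hτ : ∀ x, τ (τ x) = x ^ 2) (u : F) : τ u + u + 1 ≠ 0 := by
  intro h
  have hτu : τ u = u + 1 := by linear_combination (norm := ring_nf) h; reduce_mod_char!
  have hu : u * (u + 1) = 0 := by
    have h2 := hτ u
    rw [hτu, map_add, hτu, map_one] at h2
    linear_combination (norm := ring_nf) -h2; reduce_mod_char!
  rcases mul_eq_zero.mp hu with hu | hu
  · simp [hu] at h
  · rw [CharTwo.add_eq_zero] at hu
    simp [hu, CharTwo.add_self_eq_zero] at h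

theorem titsOvalParam_mem_titsOval (hτ : ∀ x, τ (τ x) = x ^ 2) (u : F) :
    titsOvalParam τ u ∈ titsOval τ := by
  have hW := map_add_add_one_ne_zero hτ u
  have hτW := map_add_add_one_ne_zero hτ (τ u)
  rw [hτ] at hτW
  simp only [titsOval, titsOvalParam, Set.mem_ofPred_eq, map_div₀, map_add, map_one, hτ]
  field_simp
  ring_nf; reduce_mod_char!

theorem titsOvalParam_mem_conic_iff (hτ : ∀ x, τ (τ x) = x ^ 2) (δ u : F) :
    titsOvalParam τ u ∈ conic δ ↔ τ u = δ * u ^ 2 := by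
  have hW := map_add_add_one_ne_zero hτ u
  have key : (τ u / (τ u + u + 1)) ^ 2 + δ * ((τ u + 1) / (τ u + u + 1)) ^ 2
      + τ u / (τ u + u + 1) * ((τ u + 1) / (τ u + u + 1)) - δ
      = (τ u + δ * u ^ 2) / (τ u + u + 1) ^ 2 := by
    field_simp
    ring_nf; reduce_mod_char!
  simp only [conic, titsOvalParam, Set.mem_ofPred_eq]
  rw [← sub_eq_zero, key, div_eq_zero_iff, or_iff_left (pow_ne_zero 2 hW), CharTwo.add_eq_zero]

theorem leftInverse_titsOvalParam (hτ : ∀ x, τ (τ x) = x ^ 2) :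
    LeftInverse (fun p : F × F ↦ (p.2 + 1) / (p.1 + p.2)) (titsOvalParam τ) := by
  intro u
  have hW := map_add_add_one_ne_zero hτ u
  simp only [titsOvalParam]
  field_simp
  ring_nf; reduce_mod_char!

theorem map_add_one_mul_add_of_mem_titsOval (hτ : ∀ x, τ (τ x) = x ^ 2) {s t : F}
    (h : (s, t) ∈ titsOval τ) : (τ t + 1) * (s + t) = s * (τ s + τ t) := by
  have h' := congrArg τ h
  simp only [titsOval, Set.mem_ofPred_eq] at h
  simp only [map_add, map_mul, map_pow, map_one, hτ] at h'
  linear_combination (norm := ring_nf) (t + s * τ s) * h + s * h'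
  reduce_mod_char!

theorem eq_one_of_mk_self_mem_titsOval {s : F} (h : (s, s) ∈ titsOval τ) : s = 1 := by
  simp only [titsOval, Set.mem_ofPred_eq] at h
  have h' : (τ s + 1) * (s + 1) ^ 2 = 0 := by
    linear_combination (norm := ring_nf) h; reduce_mod_char!
  rcases mul_eq_zero.mp h' with h' | h'
  · exact τ.injective (by rwa [map_one, ← CharTwo.add_eq_zero])
  · rwa [pow_eq_zero_iff two_ne_zero, CharTwo.add_eq_zero] at h'

theorem titsOvalParam_div_eq_of_mem_titsOval (hτ : ∀ x, τ (τ x) = x ^ 2) {s t : F}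
    (h : (s, t) ∈ titsOval τ) (hst : s + t ≠ 0) :
    titsOvalParam τ ((t + 1) / (s + t)) = (s, t) := by
  have hτst : τ s + τ t ≠ 0 := by rw [← map_add]; exact (map_ne_zero τ).mpr hst
  have hτu : τ ((t + 1) / (s + t)) = s / (s + t) := by
    simp only [map_div₀, map_add, map_one]
    rw [div_eq_div_iff hτst hst]
    linear_combination map_add_one_mul_add_of_mem_titsOval hτ h
  simp only [titsOvalParam, hτu]
  field_simp
  ext <;> ring_nf <;> reduce_mod_char!

theorem titsOval_eq_insert_range (hτ : ∀ x, τ (τ x) = x ^ 2) :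
    titsOval τ = insert (1, 1) (Set.range (titsOvalParam τ)) := by
  ext ⟨s, t⟩
  constructor
  · intro h
    by_cases hst : s + t = 0
    · rw [CharTwo.add_eq_zero] at hst
      subst hst
      simp [eq_one_of_mk_self_mem_titsOval h]
    · exact Or.inr ⟨_, titsOvalParam_div_eq_of_mem_titsOval hτ h hst⟩
  · rintro (h | ⟨u, hu⟩)
    · simp only [Prod.mk.injEq] at h
      simp [titsOval, h.1, h.2, CharTwo.add_self_eq_zero]
    · exact hu ▸ titsOvalParam_mem_titsOval hτ u

theorem conic_inter_titsOval_eq (hτ : ∀ x, τ (τ x) = x ^ 2) (δ : F) :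
    conic δ ∩ titsOval τ = insert (1, 1) (titsOvalParam τ '' {u | τ u = δ * u ^ 2}) := by
  have h11 : ((1, 1) : F × F) ∈ conic δ := by
    simp [conic, add_right_comm _ δ, CharTwo.add_self_eq_zero]
  rw [titsOval_eq_insert_range hτ, Set.inter_insert_of_mem h11,
    ← Set.image_preimage_eq_inter_range]
  congr 2
  ext u
  exact titsOvalParam_mem_conic_iff hτ δ u

theorem exists_setOf_map_eq_mul_sq_eq_pair [PerfectRing F 2] (hτ : ∀ x, τ (τ x) = x ^ 2)
    {δ : F} (hδ : δ ≠ 0) : ∃ v ≠ 0, {u | τ u = δ * u ^ 2} = {0, v} := by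
  have hc : τ δ * δ ^ 2 ≠ 0 := mul_ne_zero ((map_ne_zero τ).mpr hδ) (pow_ne_zero 2 hδ)
  obtain ⟨v, hv⟩ := surjective_frobenius F 2 (τ δ * δ ^ 2)⁻¹
  rw [frobenius_def] at hv
  have hv0 : v ≠ 0 := by
    rintro rfl
    rw [zero_pow two_ne_zero, eq_comm, inv_eq_zero] at hv
    exact hc hv
  have hroot_iff : ∀ u ≠ 0, τ u = δ * u ^ 2 ↔ u ^ 2 = (τ δ * δ ^ 2)⁻¹ := by
    intro u hu
    constructor
    · intro h
      have h2 := hτ u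
      rw [h, map_mul, map_pow, h] at h2
      exact eq_inv_of_mul_eq_one_left
        (mul_left_cancel₀ (pow_ne_zero 2 hu) (by linear_combination h2))
    · intro h
      rw [← CharTwo.sq_inj, ← map_pow, h, map_inv₀, map_mul, map_pow, hτ]
      field_simp
  refine ⟨v, hv0, ?_⟩
  ext u
  by_cases hu : u = 0
  · simp [hu]
  · simp only [Set.mem_ofPred_eq, Set.mem_insert_iff, Set.mem_singleton_iff, hu, false_or]
    rw [hroot_iff u hu, ← hv, CharTwo.sq_inj]

theorem one_one_notMem_range_titsOvalParam (hτ : ∀ x, τ (τ x) = x ^ 2) :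
    ((1, 1) : F × F) ∉ Set.range (titsOvalParam τ) := by
  rintro ⟨u, hu⟩
  have hu0 := leftInverse_titsOvalParam hτ u
  rw [hu] at hu0
  simp only [CharTwo.add_self_eq_zero, div_zero] at hu0
  simp [← hu0, titsOvalParam] at hu

theorem ncard_conic_inter_titsOval [Finite F] (hτ : ∀ x, τ (τ x) = x ^ 2) {δ : F}
    (hδ : δ ≠ 0) : (conic δ ∩ titsOval τ).ncard = 3 := by
  obtain ⟨v, hv0, hroots⟩ := exists_setOf_map_eq_mul_sq_eq_pair hτ hδ
  have hinj := (leftInverse_titsOvalParam hτ).injective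
  rw [conic_inter_titsOval_eq hτ, hroots, Set.image_pair,
    Set.ncard_insert_of_notMem, Set.ncard_pair (hinj.ne hv0.symm)]
  rintro (h | h) <;> exact one_one_notMem_range_titsOvalParam hτ ⟨_, h.symm⟩

end TitsOval

theorem stmt_18_general (e : ℕ) (F : Type*) [Field F] [Fintype F]
    (hF : Fintype.card F = 2 ^ (2 * e + 1)) (δ : F)
    (hδtr : ∑ i ∈ Finset.range (2 * e + 1), δ ^ (2 ^ i) = 1) :
    {p : F × F | p.1 ^ 2 + δ * p.2 ^ 2 + p.1 * p.2 = δ ∧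
        p.1 ^ (2 ^ (e + 1) + 2) + p.2 ^ (2 ^ (e + 1)) + p.1 * p.2 = 1}.ncard
      = 3 := by
  have : CharP F 2 := charP_of_card_eq_prime_pow hF
  have hδ : δ ≠ 0 := by
    rintro rfl
    simp at hδtr
  have hτ : ∀ x : F, iterateFrobenius F 2 (e + 1) (iterateFrobenius F 2 (e + 1) x) = x ^ 2 := by
    intro x
    simp only [iterateFrobenius_def, ← pow_mul, ← pow_add]
    rw [show e + 1 + (e + 1) = (2 * e + 1) + 1 by ring, pow_succ, pow_mul, ← hF,
      FiniteField.pow_card]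
  convert ncard_conic_inter_titsOval hτ hδ using 2
  ext p
  simp only [conic, titsOval, iterateFrobenius_def, Set.mem_inter_iff, Set.mem_ofPred_eq, pow_add]

/-- For `q = 2^(2e+1)`, `σ = 2^(e+1)` and `δ ∈ F_q` of absolute trace 1, the
system `s² + δt² + st = δ` and `s^(σ+2) + t^σ + st = 1` has exactly 3
solutions `(s,t) ∈ F_q × F_q`. -/
theorem stmt_18 (e : ℕ) (he : 1 ≤ e) (F : Type*) [Field F] [Fintype F]
    (hF : Fintype.card F = 2 ^ (2 * e + 1)) (δ : F)
    (hδtr : ∑ i ∈ Finset.range (2 * e + 1), δ ^ (2 ^ i) = 1) :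
    {p : F × F | p.1 ^ 2 + δ * p.2 ^ 2 + p.1 * p.2 = δ ∧
        p.1 ^ (2 ^ (e + 1) + 2) + p.2 ^ (2 ^ (e + 1)) + p.1 * p.2 = 1}.ncard
      = 3 :=
  stmt_18_general e F hF δ hδtr
end

section
/- Let q = 2^(2e+1) with e ≥ 1 and σ = 2^(e+1). For every a_1, z_2, y_1, δ ∈ F_q with δ of absolute trace 1 defining the conic s^2 + δ t^2 + st = y_1 t + a_1 and the oval s^(σ+2) + t^σ + st = y_1 t + z_2 (with z_2 ≠ y_1 appropriately chosen so the oval is nonempty of size q+1), the number of common solutions (s,t) ∈ F_q × F_q of the two equations is at most 4. -/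
open Polynomial Finset

section Aux

variable {F : Type*}

/-- coefficients of the eliminant quartic -/
def c1v [CommRing F] (d Dl y2 Y k K w W : F) : F := Dl * y2 ^ 2 * Y ^ 4 + Dl * W ^ 2 + y2 * Y ^ 4 + Y ^ 4 + Y ^ 2 * K + Y ^ 2 * W + K + W
def c2v [CommRing F] (d Dl y2 Y k K w W : F) : F := Y ^ 2 * w ^ 2 + W ^ 2
def g4v [CommRing F] (d Dl y2 Y k K w W : F) : F := d ^ 2 * Dl * y2 ^ 2 * Y ^ 4 + d ^ 2 * Dl * W ^ 2 + d ^ 2 * y2 * Y ^ 4 + d ^ 2 * Y ^ 4 + d ^ 2 * Y ^ 2 * K + d ^ 2 * Y ^ 2 * W + d * Dl * y2 ^ 2 * Y ^ 4 + d * Dl * W ^ 2 + d * y2 * Y ^ 4 + d * Y ^ 4 + d * Y ^ 2 * K + d * Y ^ 2 * W + d * K + d * W + Dl * y2 ^ 2 + y2 + 1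
def g2v [CommRing F] (d Dl y2 Y k K w W : F) : F := d * Y ^ 2 * w ^ 2 + d * W ^ 2 + Dl * y2 ^ 2 * Y ^ 4 * k + Dl * k * W ^ 2 + y2 * Y ^ 4 * k + Y ^ 4 * k + Y ^ 2 * k * K + Y ^ 2 * k * W + k * K + k * W + w ^ 2
def g0v [CommRing F] (d Dl y2 Y k K w W : F) : F := Dl * y2 ^ 2 * Y ^ 4 * k ^ 2 + Dl * y2 ^ 2 * W ^ 2 + Dl * k ^ 2 * W ^ 2 + Dl * w ^ 4 + y2 * Y ^ 4 * k ^ 2 + y2 * W ^ 2 + Y ^ 4 * k ^ 2 + Y ^ 2 * k ^ 2 * K + Y ^ 2 * k ^ 2 * W + Y ^ 2 * k * w ^ 2 + k * W ^ 2 + K * w ^ 2 + w ^ 2 * W + W ^ 2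

noncomputable def q4A [CommRing F] (d Dl y2 Y k K w W : F) : F[X] :=
  C (g4v d Dl y2 Y k K w W) * X ^ 2 + C (g2v d Dl y2 Y k K w W) * X + C (g0v d Dl y2 Y k K w W)

noncomputable def q4B [CommRing F] (d Dl y2 Y k K w W : F) : F[X] :=
  C (c1v d Dl y2 Y k K w W) * X + C (c2v d Dl y2 Y k K w W)

noncomputable def q4 [CommRing F] (d Dl y2 Y k K w W : F) : F[X] :=
  (q4A d Dl y2 Y k K w W) ^ 2 + X * (q4A d Dl y2 Y k K w W) * (q4B d Dl y2 Y k K w W)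
    + (C d * X + C k) * (X * (q4B d Dl y2 Y k K w W) ^ 2)

lemma q4_natDegree [CommRing F] [Nontrivial F] (d Dl y2 Y k K w W : F) :
    (q4 d Dl y2 Y k K w W).natDegree ≤ 4 := by
  unfold q4 q4A q4B
  compute_degree

lemma q4_eval [CommRing F] (d Dl y2 Y k K w W u : F) :
    (q4 d Dl y2 Y k K w W).eval u =
      (g4v d Dl y2 Y k K w W * u ^ 2 + g2v d Dl y2 Y k K w W * u + g0v d Dl y2 Y k K w W) ^ 2
      + u * (g4v d Dl y2 Y k K w W * u ^ 2 + g2v d Dl y2 Y k K w W * u + g0v d Dl y2 Y k K w W)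
          * (c1v d Dl y2 Y k K w W * u + c2v d Dl y2 Y k K w W)
      + (d * u + k) * (u * (c1v d Dl y2 Y k K w W * u + c2v d Dl y2 Y k K w W) ^ 2) := by
  simp [q4, q4A, q4B]

set_option maxHeartbeats 3200000 in
set_option maxRecDepth 100000 in
set_option linter.unreachableTactic false in
set_option linter.unnecessarySeqFocus false in
set_option linter.unusedTactic false in
lemma key_lemma [CommRing F] (htwo : (2:F) = 0)
    (s t S T d Dl y2 Y k K w W : F)
    (h1 : s^2 + d*t^2 + s*t + k = 0)
    (h2 : s^2*S + y2*S + Y*s^2 + T + s*t + w = 0)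
    (h3 : S^2 + Dl*T^2 + S*T + K = 0)
    (h4 : S^2*s^2 + Y^2*s^2 + y2*S^2 + t^2 + S*T + W = 0) :
    (t^3 * c1v d Dl y2 Y k K w W + t * c2v d Dl y2 Y k K w W) * s
      + (g4v d Dl y2 Y k K w W * t^4 + g2v d Dl y2 Y k K w W * t^2 + g0v d Dl y2 Y k K w W) = 0 := by
  simp only [c1v, c2v, g4v, g2v, g0v]
  linear_combination (s ^ 6 * S ^ 2 * Dl * Y + s ^ 6 * S ^ 2 * Dl + s ^ 6 * S * Dl + s ^ 6 * Dl * Y ^ 3 + s ^ 6 * Dl * Y ^ 2 + s ^ 6 * Dl * Y + s ^ 5 * t * Dl + s ^ 4 * t ^ 2 * S ^ 2 * d * Dl + s ^ 4 * t ^ 2 * S * Dl + s ^ 4 * t ^ 2 * d * Dl * Y ^ 2 + s ^ 4 * t ^ 2 * Dl + s ^ 4 * S ^ 2 * Dl * k + s ^ 4 * S ^ 2 * Dl * w + s ^ 4 * S ^ 2 * Y + s ^ 4 * S ^ 2 + s ^ 4 * S * Dl * y2 * Y ^ 2 + s ^ 4 * S * Dl * y2 + s ^ 4 * S * Dl * W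 + s ^ 4 * S * Y ^ 2 + s ^ 4 * T * Dl * Y ^ 2 + s ^ 4 * T * Dl + s ^ 4 * Dl * Y ^ 2 * k + s ^ 4 * Dl * Y ^ 2 * w + s ^ 4 * Dl * w + s ^ 4 * Y ^ 2 + s ^ 3 * t ^ 3 * Dl + s ^ 3 * t * Y ^ 2 + s ^ 2 * t ^ 4 * S * d ^ 2 * Dl + s ^ 2 * t ^ 4 * d ^ 2 * Dl * Y + s ^ 2 * t ^ 4 * d * Dl + s ^ 2 * t ^ 2 * S ^ 2 * d + s ^ 2 * t ^ 2 * S + s ^ 2 * t ^ 2 * d * Y ^ 2 + s ^ 2 * t ^ 2 * Dl * k + s ^ 2 * t ^ 2 + s ^ 2 * S ^ 2 * Dl * y2 ^ 2 * Y + s ^ 2 * S ^ 2 * Dl * y2 ^ 2 + s ^ 2 * S ^ 2 * y2 * Y + s ^ 2 * S ^ 2 * y2 + s ^ 2 * S ^ 2 * Y + s ^ 2 * S ^ 2 * k + s ^ 2 * S ^ 2 * w + s ^ 2 * S ^ 2 + s ^ 2 * S * Dl * y2 ^ 2 * Y ^ 2 + s ^ 2 * S * Dl * k ^ 2 + s ^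 2 * S * Dl * w ^ 2 + s ^ 2 * S * y2 * Y ^ 2 + s ^ 2 * S * Y ^ 2 + s ^ 2 * S * W + s ^ 2 * Dl * y2 ^ 2 * Y ^ 4 + s ^ 2 * Dl * Y * k ^ 2 + s ^ 2 * Dl * Y * w ^ 2 + s ^ 2 * Dl * w ^ 2 + s ^ 2 * Dl * W ^ 2 + s ^ 2 * y2 * Y ^ 4 + s ^ 2 * Y ^ 4 + s ^ 2 * Y ^ 2 * k + s ^ 2 * Y ^ 2 * K + s ^ 2 * Y ^ 2 * W + s ^ 2 * K + s ^ 2 * W + s * t ^ 5 * d ^ 2 * Dl + s * t ^ 3 + s * t * Dl * y2 ^ 2 * Y ^ 4 + s * t * Dl * k ^ 2 + s * t * Dl * W ^ 2 + s * t * y2 * Y ^ 4 + s * t * Y ^ 4 + s * t * Y ^ 2 * K + s * t * Y ^ 2 * W + s * t * K + s * t * W + t ^ 4 * S * d ^ 2 * Dl * y2 + t ^ 4 * T * d ^ 2 * Dl + t ^ 4 * d ^ 2 * Dl * w + t ^ 4 * d + t ^ 2 * S ^ 2 * d * Dl * y2 ^ 2 + t ^ 2 * S ^ 2 * d * y2 +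 t ^ 2 * S ^ 2 * d + t ^ 2 * S * Dl * y2 ^ 2 + t ^ 2 * S * y2 + t ^ 2 * S + t ^ 2 * d * Dl * y2 ^ 2 * Y ^ 4 + t ^ 2 * d * Dl * w ^ 2 + t ^ 2 * d * Dl * W ^ 2 + t ^ 2 * d * y2 * Y ^ 4 + t ^ 2 * d * Y ^ 4 + t ^ 2 * d * Y ^ 2 * K + t ^ 2 * d * Y ^ 2 * W + t ^ 2 * d * K + t ^ 2 * d * W + t ^ 2 * Dl * y2 ^ 2 * Y ^ 4 + t ^ 2 * Dl * W ^ 2 + t ^ 2 * y2 * Y ^ 4 + t ^ 2 * Y ^ 4 + t ^ 2 * Y ^ 2 * K + t ^ 2 * Y ^ 2 * W + t ^ 2 * k + t ^ 2 * K + t ^ 2 * W + S ^ 2 * Dl * y2 ^ 2 * k + S ^ 2 * Dl * y2 ^ 2 * w + S ^ 2 * y2 * k + S ^ 2 * y2 * w + S ^ 2 * k + S ^ 2 * w + S * Dl * y2 ^ 2 * W + S * Dl * y2 * k ^ 2 + S * Dl * y2 * w ^ 2 + S * y2 * W + S * W + T * Dl * k ^ 2 + T * Dl * w ^ 2 + Dl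 * y2 ^ 2 * Y ^ 4 * k + Dl * k ^ 2 * w + Dl * k * w ^ 2 + Dl * k * W ^ 2 + Dl * w ^ 3 + y2 * Y ^ 4 * k + Y ^ 4 * k + Y ^ 2 * k * K + Y ^ 2 * k * W + Y ^ 2 * w ^ 2 + k * K + k * W + W ^ 2) * h1 + (s ^ 6 * S ^ 2 * Dl * Y + s ^ 6 * S ^ 2 * Dl + s ^ 6 * S * Dl + s ^ 6 * Dl * Y ^ 3 + s ^ 6 * Dl * Y ^ 2 + s ^ 6 * Dl * Y + s ^ 6 * Dl + s ^ 4 * t ^ 2 * S ^ 2 * d * Dl + s ^ 4 * t ^ 2 * S * Dl + s ^ 4 * t ^ 2 * d * Dl * Y ^ 2 + s ^ 4 * t ^ 2 * d * Dl + s ^ 4 * S ^ 2 * Dl * k + s ^ 4 * S ^ 2 * Dl * w + s ^ 4 * S ^ 2 * Y + s ^ 4 * S ^ 2 + s ^ 4 * S * Dl * y2 * Y ^ 2 + s ^ 4 * S * Dl * y2 + s ^ 4 * S * Dl * W + s ^ 4 * S * Y ^ 2 + s ^ 4 * T * Dl * Y ^ 2 + s ^ 4 * T * Dl + s ^ 4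 * Dl * Y ^ 2 * k + s ^ 4 * Dl * Y ^ 2 * w + s ^ 4 * Dl * k + s ^ 4 * Dl * w + s ^ 2 * t ^ 4 * S * d ^ 2 * Dl + s ^ 2 * t ^ 4 * d ^ 2 * Dl * Y + s ^ 2 * t ^ 4 * d ^ 2 * Dl + s ^ 2 * t ^ 2 * S ^ 2 * d + s ^ 2 * t ^ 2 * S + s ^ 2 * S ^ 2 * Dl * y2 ^ 2 * Y + s ^ 2 * S ^ 2 * Dl * y2 ^ 2 + s ^ 2 * S ^ 2 * y2 * Y + s ^ 2 * S ^ 2 * y2 + s ^ 2 * S ^ 2 * Y + s ^ 2 * S ^ 2 * k + s ^ 2 * S ^ 2 * w + s ^ 2 * S ^ 2 + s ^ 2 * S * Dl * y2 ^ 2 * Y ^ 2 + s ^ 2 * S * Dl * k ^ 2 + s ^ 2 * S * Dl * w ^ 2 + s ^ 2 * S * y2 * Y ^ 2 + s ^ 2 * S * Y ^ 2 + s ^ 2 * S * W + s ^ 2 * Dl * Y * k ^ 2 + s ^ 2 * Dl * Y * w ^ 2 + s ^ 2 * Dl * k ^ 2 + s ^ 2 * Dl * w ^ 2 + t ^ 6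 * d ^ 3 * Dl + t ^ 4 * S * d ^ 2 * Dl * y2 + t ^ 4 * T * d ^ 2 * Dl + t ^ 4 * d ^ 2 * Dl * k + t ^ 4 * d ^ 2 * Dl * w + t ^ 2 * S ^ 2 * d * Dl * y2 ^ 2 + t ^ 2 * S ^ 2 * d * y2 + t ^ 2 * S ^ 2 * d + t ^ 2 * S * Dl * y2 ^ 2 + t ^ 2 * S * y2 + t ^ 2 * S + t ^ 2 * d * Dl * k ^ 2 + t ^ 2 * d * Dl * w ^ 2 + S ^ 2 * Dl * y2 ^ 2 * k + S ^ 2 * Dl * y2 ^ 2 * w + S ^ 2 * y2 * k + S ^ 2 * y2 * w + S ^ 2 * k + S ^ 2 * w + S * Dl * y2 ^ 2 * W + S * Dl * y2 * k ^ 2 + S * Dl * y2 * w ^ 2 + S * y2 * W + S * W + T * Dl * k ^ 2 + T * Dl * w ^ 2 + Dl * k ^ 3 + Dl * k ^ 2 * w + Dl * k * w ^ 2 + Dl * w ^ 3) * h2 + (s ^ 4 * Y ^ 2 + s ^ 4 + t ^ 4 * d ^ 2 + k ^ 2 + w ^ 2) * h3 + (s ^ 6 * S * Dl * Y + s ^ 6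 * S * Dl + s ^ 6 * Dl * Y ^ 2 + s ^ 4 * t ^ 2 * S * d * Dl + s ^ 4 * t ^ 2 * Dl + s ^ 4 * S * Dl * k + s ^ 4 * S * Dl * w + s ^ 4 * S * Y + s ^ 4 * S + s ^ 4 * Dl * W + s ^ 4 + s ^ 2 * t ^ 2 * S * d + s ^ 2 * t ^ 2 + s ^ 2 * S * Dl * y2 ^ 2 * Y + s ^ 2 * S * Dl * y2 ^ 2 + s ^ 2 * S * y2 * Y + s ^ 2 * S * y2 + s ^ 2 * S * Y + s ^ 2 * S * k + s ^ 2 * S * w + s ^ 2 * S + s ^ 2 * Dl * y2 ^ 2 * Y ^ 2 + s ^ 2 * y2 * Y ^ 2 + s ^ 2 * Y ^ 2 + s ^ 2 * W + t ^ 4 * d ^ 2 + t ^ 2 * S * d * Dl * y2 ^ 2 + t ^ 2 * S * d * y2 + t ^ 2 * S * d + t ^ 2 * Dl * y2 ^ 2 + t ^ 2 * y2 + t ^ 2 + S * Dl * y2 ^ 2 * k + S * Dl * y2 ^ 2 * w + S * y2 * k + S * y2 * w + S * k + S * w + Dl * y2 ^ 2 * W + y2 * W + k ^ 2 + w ^ 2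 + W) * h4 + (-s ^ 8 * S ^ 3 * Dl * Y - s ^ 8 * S ^ 3 * Dl - s ^ 8 * S ^ 2 * Dl * Y ^ 2 - s ^ 8 * S ^ 2 * Dl * Y - s ^ 8 * S ^ 2 * Dl - s ^ 8 * S * Dl * Y ^ 3 - s ^ 8 * S * Dl * Y ^ 2 - s ^ 8 * S * Dl * Y - s ^ 8 * S * Dl - s ^ 8 * Dl * Y ^ 4 - s ^ 8 * Dl * Y ^ 3 - s ^ 8 * Dl * Y ^ 2 - s ^ 8 * Dl * Y - s ^ 7 * t * S ^ 2 * Dl * Y - s ^ 7 * t * S ^ 2 * Dl - s ^ 7 * t * S * Dl - s ^ 7 * t * Dl * Y ^ 3 - s ^ 7 * t * Dl * Y ^ 2 - s ^ 7 * t * Dl * Y - s ^ 7 * t * Dl - s ^ 6 * t ^ 2 * S ^ 3 * d * Dl - s ^ 6 * t ^ 2 * S ^ 2 * d * Dl * Y - s ^ 6 * t ^ 2 * S ^ 2 * d * Dl - s ^ 6 * t ^ 2 * S ^ 2 * Dl - s ^ 6 * t ^ 2 * S * d * Dl * Y ^ 2 - s ^ 6 * t ^ 2 * S * d * Dl - s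 ^ 6 * t ^ 2 * S * Dl * Y - s ^ 6 * t ^ 2 * S * Dl - s ^ 6 * t ^ 2 * d * Dl * Y ^ 3 - s ^ 6 * t ^ 2 * d * Dl * Y ^ 2 - s ^ 6 * t ^ 2 * d * Dl * Y - s ^ 6 * t ^ 2 * Dl * Y ^ 2 - s ^ 6 * t ^ 2 * Dl - s ^ 6 * S ^ 3 * Dl * y2 * Y - s ^ 6 * S ^ 3 * Dl * y2 - s ^ 6 * S ^ 3 * Dl * k - s ^ 6 * S ^ 3 * Dl * w - s ^ 6 * S ^ 3 * Y - s ^ 6 * S ^ 3 - s ^ 6 * S ^ 2 * T * Dl * Y - s ^ 6 * S ^ 2 * T * Dl - s ^ 6 * S ^ 2 * Dl * y2 * Y ^ 2 - s ^ 6 * S ^ 2 * Dl * y2 - s ^ 6 * S ^ 2 * Dl * Y * k - s ^ 6 * S ^ 2 * Dl * Y * w - s ^ 6 * S ^ 2 * Dl * k - s ^ 6 * S ^ 2 * Dl * w - s ^ 6 * S ^ 2 * Dl * W - s ^ 6 * S ^ 2 * Y ^ 2 - s ^ 6 * S ^ 2 * Y - s ^ 6 * S ^ 2 - s ^ 6 *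 S * T * Dl * Y ^ 2 - s ^ 6 * S * T * Dl - s ^ 6 * S * Dl * y2 * Y ^ 3 - s ^ 6 * S * Dl * y2 * Y ^ 2 - s ^ 6 * S * Dl * y2 * Y - s ^ 6 * S * Dl * y2 - s ^ 6 * S * Dl * Y ^ 2 * k - s ^ 6 * S * Dl * Y ^ 2 * w - s ^ 6 * S * Dl * Y * W - s ^ 6 * S * Dl * k - s ^ 6 * S * Dl * w - s ^ 6 * S * Dl * W - s ^ 6 * S * Y ^ 3 - s ^ 6 * S * Y ^ 2 - s ^ 6 * T * Dl * Y ^ 3 - s ^ 6 * T * Dl * Y ^ 2 - s ^ 6 * T * Dl * Y - s ^ 6 * T * Dl - s ^ 6 * Dl * Y ^ 3 * k - s ^ 6 * Dl * Y ^ 3 * w - s ^ 6 * Dl * Y ^ 2 * k - s ^ 6 * Dl * Y ^ 2 * w - s ^ 6 * Dl * Y ^ 2 * W - s ^ 6 * Dl * Y * k - s ^ 6 * Dl * Y * w - s ^ 6 * Dl * w - s ^ 6 * Y ^ 2 - s ^ 5 * t ^ 3 * S ^ 2 * d * Dl - s ^ 5 * t ^ 3 * S * Dl - s ^ 5 * t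 ^ 3 * d * Dl * Y ^ 2 - s ^ 5 * t ^ 3 * d * Dl - s ^ 5 * t ^ 3 * Dl - s ^ 5 * t * S ^ 2 * Dl * k - s ^ 5 * t * S ^ 2 * Dl * w - s ^ 5 * t * S ^ 2 * Y - s ^ 5 * t * S ^ 2 - s ^ 5 * t * S * Dl * y2 * Y ^ 2 - s ^ 5 * t * S * Dl * y2 - s ^ 5 * t * S * Dl * W - s ^ 5 * t * S * Y ^ 2 - s ^ 5 * t * T * Dl * Y ^ 2 - s ^ 5 * t * T * Dl - s ^ 5 * t * Dl * Y ^ 2 * k - s ^ 5 * t * Dl * Y ^ 2 * w - s ^ 5 * t * Dl * k - s ^ 5 * t * Dl * w - s ^ 5 * t * Y ^ 2 - s ^ 4 * t ^ 4 * S ^ 2 * d ^ 2 * Dl - s ^ 4 * t ^ 4 * S * d ^ 2 * Dl * Y - s ^ 4 * t ^ 4 * S * d ^ 2 * Dl - s ^ 4 * t ^ 4 * S * d * Dl - s ^ 4 * t ^ 4 * d ^ 2 * Dl * Y ^ 2 - s ^ 4 * t ^ 4 * d ^ 2 * Dl * Y - s ^ 4 * t ^ 4 * d * Dl - s ^ 4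 * t ^ 4 * Dl - s ^ 4 * t ^ 2 * S ^ 3 * d * Dl * y2 - s ^ 4 * t ^ 2 * S ^ 3 * d - s ^ 4 * t ^ 2 * S ^ 2 * T * d * Dl - s ^ 4 * t ^ 2 * S ^ 2 * d * Dl * k - s ^ 4 * t ^ 2 * S ^ 2 * d * Dl * w - s ^ 4 * t ^ 2 * S ^ 2 * d * Y - s ^ 4 * t ^ 2 * S ^ 2 * d - s ^ 4 * t ^ 2 * S ^ 2 * Dl * y2 - s ^ 4 * t ^ 2 * S ^ 2 - s ^ 4 * t ^ 2 * S * T * Dl - s ^ 4 * t ^ 2 * S * d * Dl * y2 * Y ^ 2 - s ^ 4 * t ^ 2 * S * d * Dl * y2 - s ^ 4 * t ^ 2 * S * d * Dl * W - s ^ 4 * t ^ 2 * S * d * Y ^ 2 - s ^ 4 * t ^ 2 * S * Dl * k - s ^ 4 * t ^ 2 * S * Dl * w - s ^ 4 * t ^ 2 * S * Y - s ^ 4 * t ^ 2 * S - s ^ 4 * t ^ 2 * T * d * Dl * Y ^ 2 - s ^ 4 * t ^ 2 * T * d * Dl - s ^ 4 * t ^ 2 * d * Dl * Y ^ 2 *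 k - s ^ 4 * t ^ 2 * d * Dl * Y ^ 2 * w - s ^ 4 * t ^ 2 * d * Dl * w - s ^ 4 * t ^ 2 * d * Y ^ 2 - s ^ 4 * t ^ 2 * Dl * k - s ^ 4 * t ^ 2 * Dl * W - s ^ 4 * t ^ 2 * Y ^ 2 - s ^ 4 * t ^ 2 - s ^ 4 * S ^ 3 * Dl * y2 ^ 2 * Y - s ^ 4 * S ^ 3 * Dl * y2 ^ 2 - s ^ 4 * S ^ 3 * Dl * y2 * k - s ^ 4 * S ^ 3 * Dl * y2 * w - 2 * s ^ 4 * S ^ 3 * y2 * Y - 2 * s ^ 4 * S ^ 3 * y2 - s ^ 4 * S ^ 3 * Y - s ^ 4 * S ^ 3 * k - s ^ 4 * S ^ 3 * w - s ^ 4 * S ^ 3 - s ^ 4 * S ^ 2 * T * Dl * k - s ^ 4 * S ^ 2 * T * Dl * w - s ^ 4 * S ^ 2 * T * Y - s ^ 4 * S ^ 2 * T - 2 * s ^ 4 * S ^ 2 * Dl * y2 ^ 2 * Y ^ 2 - s ^ 4 * S ^ 2 * Dl * y2 ^ 2 * Y - s ^ 4 * S ^ 2 * Dl * y2 ^ 2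 - s ^ 4 * S ^ 2 * Dl * y2 * W - s ^ 4 * S ^ 2 * Dl * k ^ 2 - s ^ 4 * S ^ 2 * Dl * k * w - s ^ 4 * S ^ 2 * Dl * w ^ 2 - 2 * s ^ 4 * S ^ 2 * y2 * Y ^ 2 - s ^ 4 * S ^ 2 * y2 * Y - s ^ 4 * S ^ 2 * y2 - 2 * s ^ 4 * S ^ 2 * Y ^ 2 - s ^ 4 * S ^ 2 * Y * k - s ^ 4 * S ^ 2 * Y * w - s ^ 4 * S ^ 2 * Y - s ^ 4 * S ^ 2 * k - s ^ 4 * S ^ 2 * w - s ^ 4 * S ^ 2 * W - s ^ 4 * S ^ 2 - s ^ 4 * S * T * Dl * y2 * Y ^ 2 - s ^ 4 * S * T * Dl * y2 - s ^ 4 * S * T * Dl * W - s ^ 4 * S * T * Y ^ 2 - s ^ 4 * S * T - s ^ 4 * S * Dl * y2 ^ 2 * Y ^ 3 - s ^ 4 * S * Dl * y2 ^ 2 * Y ^ 2 - s ^ 4 * S * Dl * y2 * Y ^ 2 * k - s ^ 4 * S * Dl * y2 * Y ^ 2 * w - s ^ 4 * S * Dl * y2 * k - s ^ 4 * S * Dl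 * y2 * w - s ^ 4 * S * Dl * Y * k ^ 2 - s ^ 4 * S * Dl * Y * w ^ 2 - s ^ 4 * S * Dl * k ^ 2 - s ^ 4 * S * Dl * k * W - s ^ 4 * S * Dl * w ^ 2 - s ^ 4 * S * Dl * w * W - s ^ 4 * S * y2 * Y ^ 3 - s ^ 4 * S * y2 * Y ^ 2 - s ^ 4 * S * Y ^ 3 - s ^ 4 * S * Y ^ 2 * k - s ^ 4 * S * Y ^ 2 * w - s ^ 4 * S * Y ^ 2 - s ^ 4 * S * Y * W - s ^ 4 * S * W - s ^ 4 * T ^ 2 * Dl * Y ^ 2 - s ^ 4 * T ^ 2 * Dl - s ^ 4 * T * Dl * Y ^ 2 * k - s ^ 4 * T * Dl * Y ^ 2 * w - s ^ 4 * T * Dl * k - s ^ 4 * T * Dl * w - s ^ 4 * Dl * y2 ^ 2 * Y ^ 4 - s ^ 4 * Dl * Y ^ 2 * k ^ 2 - s ^ 4 * Dl * Y ^ 2 * k * w - s ^ 4 * Dl * Y ^ 2 * w ^ 2 - s ^ 4 * Dl * Y * k ^ 2 - s ^ 4 * Dl * Y * w ^ 2 - s ^ 4 * Dl * k * w - s ^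 4 * Dl * w ^ 2 - s ^ 4 * Dl * W ^ 2 - s ^ 4 * y2 * Y ^ 4 - s ^ 4 * Y ^ 4 - s ^ 4 * Y ^ 2 * k - s ^ 4 * Y ^ 2 * K - s ^ 4 * Y ^ 2 * W - s ^ 4 * K - s ^ 4 * W - s ^ 3 * t ^ 5 * S * d ^ 2 * Dl - s ^ 3 * t ^ 5 * d ^ 2 * Dl * Y - s ^ 3 * t ^ 5 * d ^ 2 * Dl - s ^ 3 * t ^ 5 * d * Dl - s ^ 3 * t ^ 3 * S ^ 2 * d - s ^ 3 * t ^ 3 * S - s ^ 3 * t ^ 3 * d * Y ^ 2 - s ^ 3 * t ^ 3 * Dl * k - s ^ 3 * t ^ 3 - s ^ 3 * t * S ^ 2 * Dl * y2 ^ 2 * Y - s ^ 3 * t * S ^ 2 * Dl * y2 ^ 2 - s ^ 3 * t * S ^ 2 * y2 * Y - s ^ 3 * t * S ^ 2 * y2 - s ^ 3 * t * S ^ 2 * Y - s ^ 3 * t * S ^ 2 * k - s ^ 3 * t * S ^ 2 * w - s ^ 3 * t * S ^ 2 - s ^ 3 * t * S * Dl * y2 ^ 2 * Y ^ 2 - s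 ^ 3 * t * S * Dl * k ^ 2 - s ^ 3 * t * S * Dl * w ^ 2 - s ^ 3 * t * S * y2 * Y ^ 2 - s ^ 3 * t * S * Y ^ 2 - s ^ 3 * t * S * W - s ^ 3 * t * Dl * y2 ^ 2 * Y ^ 4 - s ^ 3 * t * Dl * Y * k ^ 2 - s ^ 3 * t * Dl * Y * w ^ 2 - s ^ 3 * t * Dl * k ^ 2 - s ^ 3 * t * Dl * w ^ 2 - s ^ 3 * t * Dl * W ^ 2 - s ^ 3 * t * y2 * Y ^ 4 - s ^ 3 * t * Y ^ 4 - s ^ 3 * t * Y ^ 2 * k - s ^ 3 * t * Y ^ 2 * K - s ^ 3 * t * Y ^ 2 * W - s ^ 3 * t * K - s ^ 3 * t * W - s ^ 2 * t ^ 6 * S * d ^ 3 * Dl - s ^ 2 * t ^ 6 * d ^ 3 * Dl * Y - s ^ 2 * t ^ 6 * d ^ 2 * Dl - s ^ 2 * t ^ 4 * S ^ 2 * d ^ 2 * Dl * y2 - s ^ 2 * t ^ 4 * S ^ 2 * d ^ 2 - s ^ 2 * t ^ 4 * S * T * d ^ 2 * Dl - s ^ 2 * t ^ 4 * S * d ^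 2 * Dl * y2 * Y - s ^ 2 * t ^ 4 * S * d ^ 2 * Dl * y2 - s ^ 2 * t ^ 4 * S * d ^ 2 * Dl * k - s ^ 2 * t ^ 4 * S * d ^ 2 * Dl * w - s ^ 2 * t ^ 4 * S * d - s ^ 2 * t ^ 4 * T * d ^ 2 * Dl * Y - s ^ 2 * t ^ 4 * T * d ^ 2 * Dl - s ^ 2 * t ^ 4 * d ^ 2 * Dl * Y * k - s ^ 2 * t ^ 4 * d ^ 2 * Dl * Y * w - s ^ 2 * t ^ 4 * d ^ 2 * Dl * w - s ^ 2 * t ^ 4 * d ^ 2 * Y ^ 2 - s ^ 2 * t ^ 4 * d * Dl * k - s ^ 2 * t ^ 4 * d - s ^ 2 * t ^ 4 - s ^ 2 * t ^ 2 * S ^ 3 * d * Dl * y2 ^ 2 - 2 * s ^ 2 * t ^ 2 * S ^ 3 * d * y2 - s ^ 2 * t ^ 2 * S ^ 3 * d - s ^ 2 * t ^ 2 * S ^ 2 * T * d - s ^ 2 * t ^ 2 * S ^ 2 * d * Dl * y2 ^ 2 * Y - s ^ 2 * t ^ 2 * S ^ 2 * d * Dl * y2 ^ 2 - s ^ 2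 * t ^ 2 * S ^ 2 * d * y2 * Y - s ^ 2 * t ^ 2 * S ^ 2 * d * y2 - s ^ 2 * t ^ 2 * S ^ 2 * d * Y - s ^ 2 * t ^ 2 * S ^ 2 * d * k - s ^ 2 * t ^ 2 * S ^ 2 * d * w - s ^ 2 * t ^ 2 * S ^ 2 * d - s ^ 2 * t ^ 2 * S ^ 2 * Dl * y2 ^ 2 - 2 * s ^ 2 * t ^ 2 * S ^ 2 * y2 - s ^ 2 * t ^ 2 * S ^ 2 - s ^ 2 * t ^ 2 * S * T - s ^ 2 * t ^ 2 * S * d * Dl * y2 ^ 2 * Y ^ 2 - s ^ 2 * t ^ 2 * S * d * Dl * k ^ 2 - s ^ 2 * t ^ 2 * S * d * Dl * w ^ 2 - s ^ 2 * t ^ 2 * S * d * y2 * Y ^ 2 - s ^ 2 * t ^ 2 * S * d * Y ^ 2 - s ^ 2 * t ^ 2 * S * d * W - s ^ 2 * t ^ 2 * S * Dl * y2 ^ 2 * Y - s ^ 2 * t ^ 2 * S * Dl * y2 ^ 2 - s ^ 2 * t ^ 2 * S * y2 * Y - s ^ 2 * t ^ 2 * S * y2 - s ^ 2 * t ^ 2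 * S * Y - s ^ 2 * t ^ 2 * S * k - s ^ 2 * t ^ 2 * S * w - s ^ 2 * t ^ 2 * S - s ^ 2 * t ^ 2 * d * Dl * y2 ^ 2 * Y ^ 4 - s ^ 2 * t ^ 2 * d * Dl * Y * k ^ 2 - s ^ 2 * t ^ 2 * d * Dl * Y * w ^ 2 - s ^ 2 * t ^ 2 * d * Dl * w ^ 2 - s ^ 2 * t ^ 2 * d * Dl * W ^ 2 - s ^ 2 * t ^ 2 * d * y2 * Y ^ 4 - s ^ 2 * t ^ 2 * d * Y ^ 4 - s ^ 2 * t ^ 2 * d * Y ^ 2 * k - s ^ 2 * t ^ 2 * d * Y ^ 2 * K - s ^ 2 * t ^ 2 * d * Y ^ 2 * W - s ^ 2 * t ^ 2 * d * K - s ^ 2 * t ^ 2 * d * W - s ^ 2 * t ^ 2 * Dl * y2 ^ 2 * Y ^ 4 - s ^ 2 * t ^ 2 * Dl * y2 ^ 2 * Y ^ 2 - s ^ 2 * t ^ 2 * Dl * k ^ 2 - s ^ 2 * t ^ 2 * Dl * W ^ 2 - s ^ 2 * t ^ 2 * y2 * Y ^ 4 - s ^ 2 * t ^ 2 * y2 *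 Y ^ 2 - s ^ 2 * t ^ 2 * Y ^ 4 - s ^ 2 * t ^ 2 * Y ^ 2 * K - s ^ 2 * t ^ 2 * Y ^ 2 * W - s ^ 2 * t ^ 2 * Y ^ 2 - s ^ 2 * t ^ 2 * k - s ^ 2 * t ^ 2 * K - 2 * s ^ 2 * t ^ 2 * W - s ^ 2 * S ^ 3 * Dl * y2 ^ 3 * Y - s ^ 2 * S ^ 3 * Dl * y2 ^ 3 - s ^ 2 * S ^ 3 * Dl * y2 ^ 2 * k - s ^ 2 * S ^ 3 * Dl * y2 ^ 2 * w - s ^ 2 * S ^ 3 * y2 ^ 2 * Y - s ^ 2 * S ^ 3 * y2 ^ 2 - s ^ 2 * S ^ 3 * y2 * Y - 2 * s ^ 2 * S ^ 3 * y2 * k - 2 * s ^ 2 * S ^ 3 * y2 * w - s ^ 2 * S ^ 3 * y2 - s ^ 2 * S ^ 3 * k - s ^ 2 * S ^ 3 * w - s ^ 2 * S ^ 2 * T * Dl * y2 ^ 2 * Y - s ^ 2 * S ^ 2 * T * Dl * y2 ^ 2 - s ^ 2 * S ^ 2 * T * y2 * Y - s ^ 2 * S ^ 2 * T * y2 - s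 ^ 2 * S ^ 2 * T * Y - s ^ 2 * S ^ 2 * T * k - s ^ 2 * S ^ 2 * T * w - s ^ 2 * S ^ 2 * T - s ^ 2 * S ^ 2 * Dl * y2 ^ 3 * Y ^ 2 - s ^ 2 * S ^ 2 * Dl * y2 ^ 2 * Y * k - s ^ 2 * S ^ 2 * Dl * y2 ^ 2 * Y * w - s ^ 2 * S ^ 2 * Dl * y2 ^ 2 * k - s ^ 2 * S ^ 2 * Dl * y2 ^ 2 * w - s ^ 2 * S ^ 2 * Dl * y2 ^ 2 * W - s ^ 2 * S ^ 2 * Dl * y2 * k ^ 2 - s ^ 2 * S ^ 2 * Dl * y2 * w ^ 2 - s ^ 2 * S ^ 2 * y2 ^ 2 * Y ^ 2 - s ^ 2 * S ^ 2 * y2 * Y ^ 2 - s ^ 2 * S ^ 2 * y2 * Y * k - s ^ 2 * S ^ 2 * y2 * Y * w - s ^ 2 * S ^ 2 * y2 * k - s ^ 2 * S ^ 2 * y2 * w - 2 * s ^ 2 * S ^ 2 * y2 * W - s ^ 2 * S ^ 2 * Y * k - s ^ 2 * S ^ 2 * Y * w - s ^ 2 * S ^ 2 * k ^ 2 - s ^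 2 * S ^ 2 * k * w - s ^ 2 * S ^ 2 * k - s ^ 2 * S ^ 2 * w ^ 2 - s ^ 2 * S ^ 2 * w - s ^ 2 * S ^ 2 * W - s ^ 2 * S * T * Dl * y2 ^ 2 * Y ^ 2 - s ^ 2 * S * T * Dl * k ^ 2 - s ^ 2 * S * T * Dl * w ^ 2 - s ^ 2 * S * T * y2 * Y ^ 2 - s ^ 2 * S * T * Y ^ 2 - s ^ 2 * S * T * W - s ^ 2 * S * Dl * y2 ^ 2 * Y ^ 2 * k - s ^ 2 * S * Dl * y2 ^ 2 * Y ^ 2 * w - s ^ 2 * S * Dl * y2 ^ 2 * Y * W - s ^ 2 * S * Dl * y2 ^ 2 * W - s ^ 2 * S * Dl * y2 * Y * k ^ 2 - s ^ 2 * S * Dl * y2 * Y * w ^ 2 - s ^ 2 * S * Dl * y2 * k ^ 2 - s ^ 2 * S * Dl * y2 * w ^ 2 - s ^ 2 * S * Dl * k ^ 3 - s ^ 2 * S * Dl * k ^ 2 * w - s ^ 2 * S * Dl * k * w ^ 2 - s ^ 2 * S * Dl * w ^ 3 - s ^ 2 * S * y2 * Y ^ 2 * k - s ^ 2 * S * y2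 * Y ^ 2 * w - s ^ 2 * S * y2 * Y * W - s ^ 2 * S * y2 * W - s ^ 2 * S * Y ^ 2 * k - s ^ 2 * S * Y ^ 2 * w - s ^ 2 * S * Y * W - s ^ 2 * S * k * W - s ^ 2 * S * w * W - s ^ 2 * S * W - s ^ 2 * T * Dl * Y * k ^ 2 - s ^ 2 * T * Dl * Y * w ^ 2 - s ^ 2 * T * Dl * k ^ 2 - s ^ 2 * T * Dl * w ^ 2 - s ^ 2 * Dl * y2 ^ 2 * Y ^ 4 * k - s ^ 2 * Dl * y2 ^ 2 * Y ^ 2 * W - s ^ 2 * Dl * Y * k ^ 3 - s ^ 2 * Dl * Y * k ^ 2 * w - s ^ 2 * Dl * Y * k * w ^ 2 - s ^ 2 * Dl * Y * w ^ 3 - s ^ 2 * Dl * k ^ 2 * w - s ^ 2 * Dl * k * w ^ 2 - s ^ 2 * Dl * k * W ^ 2 - s ^ 2 * Dl * w ^ 3 - s ^ 2 * y2 * Y ^ 4 * k - s ^ 2 * y2 * Y ^ 2 * W - s ^ 2 * Y ^ 4 * k - s ^ 2 * Y ^ 2 * k ^ 2 - s ^ 2 * Y ^ 2 * k * K - s ^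 2 * Y ^ 2 * k * W - s ^ 2 * Y ^ 2 * w ^ 2 - s ^ 2 * Y ^ 2 * W - s ^ 2 * k * K - s ^ 2 * k * W - s ^ 2 * W ^ 2 - s * t ^ 7 * d ^ 3 * Dl - s * t ^ 5 * S * d ^ 2 * Dl * y2 - s * t ^ 5 * T * d ^ 2 * Dl - s * t ^ 5 * d ^ 2 * Dl * k - s * t ^ 5 * d ^ 2 * Dl * w - s * t ^ 5 * d - s * t ^ 3 * S ^ 2 * d * Dl * y2 ^ 2 - s * t ^ 3 * S ^ 2 * d * y2 - s * t ^ 3 * S ^ 2 * d - s * t ^ 3 * S * Dl * y2 ^ 2 - s * t ^ 3 * S * y2 - s * t ^ 3 * S - s * t ^ 3 * d * Dl * y2 ^ 2 * Y ^ 4 - s * t ^ 3 * d * Dl * k ^ 2 - s * t ^ 3 * d * Dl * w ^ 2 - s * t ^ 3 * d * Dl * W ^ 2 - s * t ^ 3 * d * y2 * Y ^ 4 - s * t ^ 3 * d * Y ^ 4 - s * t ^ 3 * d * Y ^ 2 * K - s * t ^ 3 * d * Y ^ 2 * W - s * t ^ 3 * d * K - s * t ^ 3 * d * W - s * t ^ 3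 * k - s * t * S ^ 2 * Dl * y2 ^ 2 * k - s * t * S ^ 2 * Dl * y2 ^ 2 * w - s * t * S ^ 2 * y2 * k - s * t * S ^ 2 * y2 * w - s * t * S ^ 2 * k - s * t * S ^ 2 * w - s * t * S * Dl * y2 ^ 2 * W - s * t * S * Dl * y2 * k ^ 2 - s * t * S * Dl * y2 * w ^ 2 - s * t * S * y2 * W - s * t * S * W - s * t * T * Dl * k ^ 2 - s * t * T * Dl * w ^ 2 - s * t * Dl * y2 ^ 2 * Y ^ 4 * k - s * t * Dl * k ^ 3 - s * t * Dl * k ^ 2 * w - s * t * Dl * k * w ^ 2 - s * t * Dl * k * W ^ 2 - s * t * Dl * w ^ 3 - s * t * y2 * Y ^ 4 * k - s * t * Y ^ 4 * k - s * t * Y ^ 2 * k * K - s * t * Y ^ 2 * k * W - s * t * k * K - s * t * k * W - t ^ 6 * S * d ^ 3 * Dl * y2 - t ^ 6 * T * d ^ 3 * Dl - t ^ 6 * d ^ 3 * Dl * w - t ^ 6 * d ^ 2 - t ^ 4 * S ^ 2 * d ^ 2 * Dl * y2 ^ 2 - t ^ 4 * S ^ 2 * d ^ 2 * y2 - t ^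 4 * S ^ 2 * d ^ 2 - t ^ 4 * S * T * d ^ 2 * Dl * y2 - t ^ 4 * S * T * d ^ 2 - t ^ 4 * S * d ^ 2 * Dl * y2 * k - t ^ 4 * S * d ^ 2 * Dl * y2 * w - t ^ 4 * S * d * Dl * y2 ^ 2 - t ^ 4 * S * d * y2 - t ^ 4 * S * d - t ^ 4 * T ^ 2 * d ^ 2 * Dl - t ^ 4 * T * d ^ 2 * Dl * k - t ^ 4 * T * d ^ 2 * Dl * w - t ^ 4 * d ^ 2 * Dl * k * w - t ^ 4 * d ^ 2 * Dl * w ^ 2 - t ^ 4 * d ^ 2 * K - t ^ 4 * d ^ 2 * W - t ^ 4 * d * k - t ^ 2 * S ^ 3 * d * Dl * y2 ^ 3 - t ^ 2 * S ^ 3 * d * y2 ^ 2 - t ^ 2 * S ^ 3 * d * y2 - t ^ 2 * S ^ 2 * T * d * Dl * y2 ^ 2 - t ^ 2 * S ^ 2 * T * d * y2 - t ^ 2 * S ^ 2 * T * d - t ^ 2 * S ^ 2 * d * Dl * y2 ^ 2 * k - t ^ 2 * S ^ 2 * d * Dl * y2 ^ 2 * w - t ^ 2 * S ^ 2 * d *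 y2 * k - t ^ 2 * S ^ 2 * d * y2 * w - t ^ 2 * S ^ 2 * d * k - t ^ 2 * S ^ 2 * d * w - t ^ 2 * S ^ 2 * Dl * y2 ^ 3 - t ^ 2 * S ^ 2 * y2 ^ 2 - t ^ 2 * S ^ 2 * y2 - t ^ 2 * S * T * Dl * y2 ^ 2 - t ^ 2 * S * T * y2 - t ^ 2 * S * T - t ^ 2 * S * d * Dl * y2 ^ 2 * W - t ^ 2 * S * d * Dl * y2 * k ^ 2 - t ^ 2 * S * d * Dl * y2 * w ^ 2 - t ^ 2 * S * d * y2 * W - t ^ 2 * S * d * W - t ^ 2 * S * Dl * y2 ^ 2 * k - t ^ 2 * S * Dl * y2 ^ 2 * w - t ^ 2 * S * y2 * k - t ^ 2 * S * y2 * w - t ^ 2 * S * k - t ^ 2 * S * w - t ^ 2 * T * d * Dl * k ^ 2 - t ^ 2 * T * d * Dl * w ^ 2 - t ^ 2 * d * Dl * y2 ^ 2 * Y ^ 4 * k - t ^ 2 * d * Dl * k ^ 2 * w - t ^ 2 * d * Dl * k * w ^ 2 - t ^ 2 * d * Dl * k * W ^ 2 - t ^ 2 * d * Dl * w ^ 3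 - t ^ 2 * d * y2 * Y ^ 4 * k - t ^ 2 * d * Y ^ 4 * k - t ^ 2 * d * Y ^ 2 * k * K - t ^ 2 * d * Y ^ 2 * k * W - t ^ 2 * d * k * K - t ^ 2 * d * k * W - t ^ 2 * Dl * y2 ^ 2 * W - t ^ 2 * y2 * W - t ^ 2 * k ^ 2 - t ^ 2 * W - S ^ 3 * Dl * y2 ^ 3 * k - S ^ 3 * Dl * y2 ^ 3 * w - S ^ 3 * y2 ^ 2 * k - S ^ 3 * y2 ^ 2 * w - S ^ 3 * y2 * k - S ^ 3 * y2 * w - S ^ 2 * T * Dl * y2 ^ 2 * k - S ^ 2 * T * Dl * y2 ^ 2 * w - S ^ 2 * T * y2 * k - S ^ 2 * T * y2 * w - S ^ 2 * T * k - S ^ 2 * T * w - S ^ 2 * Dl * y2 ^ 3 * W - S ^ 2 * Dl * y2 ^ 2 * k ^ 2 - S ^ 2 * Dl * y2 ^ 2 * k * w - S ^ 2 * Dl * y2 ^ 2 * w ^ 2 - S ^ 2 * y2 ^ 2 * W - S ^ 2 * y2 * k ^ 2 - S ^ 2 * y2 * k * w - S ^ 2 * y2 * w ^ 2 - S ^ 2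 * y2 * W - S ^ 2 * k ^ 2 - S ^ 2 * k * w - S ^ 2 * w ^ 2 - S * T * Dl * y2 ^ 2 * W - S * T * Dl * y2 * k ^ 2 - S * T * Dl * y2 * w ^ 2 - S * T * y2 * W - S * T * k ^ 2 - S * T * w ^ 2 - S * T * W - S * Dl * y2 ^ 2 * k * W - S * Dl * y2 ^ 2 * w * W - S * Dl * y2 * k ^ 3 - S * Dl * y2 * k ^ 2 * w - S * Dl * y2 * k * w ^ 2 - S * Dl * y2 * w ^ 3 - S * y2 * k * W - S * y2 * w * W - S * k * W - S * w * W - T ^ 2 * Dl * k ^ 2 - T ^ 2 * Dl * w ^ 2 - T * Dl * k ^ 3 - T * Dl * k ^ 2 * w - T * Dl * k * w ^ 2 - T * Dl * w ^ 3 - Dl * k ^ 3 * w - Dl * k ^ 2 * w ^ 2 - Dl * k * w ^ 3 - k ^ 2 * K - k ^ 2 * W) * htwo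

/-- trace function -/
def tr19 [CommRing F] (n : ℕ) (x : F) : F := ∑ i ∈ Finset.range n, x ^ 2 ^ i

lemma pow2_add [CommRing F] (htwo : (2:F) = 0) (n : ℕ) (a b : F) :
    (a + b) ^ 2 ^ n = a ^ 2 ^ n + b ^ 2 ^ n := by
  induction n with
  | zero => simp
  | succ n ih =>
    have h2 : (2:ℕ) ^ (n+1) = 2 ^ n * 2 := by rw [pow_succ]
    rw [h2, pow_mul, pow_mul, pow_mul, ih]
    linear_combination (a ^ 2 ^ n * b ^ 2 ^ n) * htwo

lemma tr19_add [CommRing F] (htwo : (2:F) = 0) (n : ℕ) (a b : F) :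
    tr19 n (a + b) = tr19 n a + tr19 n b := by
  unfold tr19
  rw [← Finset.sum_add_distrib]
  exact Finset.sum_congr rfl fun i _ => pow2_add htwo i a b

lemma tr19_sq [CommRing F] (n : ℕ) (a : F) (ha : a ^ 2 ^ n = a) :
    tr19 n (a ^ 2) = tr19 n a := by
  unfold tr19
  have h1 : ∀ i : ℕ, (a ^ 2) ^ 2 ^ i = a ^ 2 ^ (i + 1) := by
    intro i
    rw [← pow_mul]
    congr 1
    rw [pow_succ]
    ring
  have h2 := Finset.sum_range_succ' (fun i => a ^ 2 ^ i) n
  have h3 := Finset.sum_range_succ (fun i => a ^ 2 ^ i) n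
  simp only [pow_zero, pow_one, ha] at h2 h3
  have h4 : (∑ i ∈ Finset.range n, (a^2) ^ 2 ^ i) = ∑ i ∈ Finset.range n, a ^ 2 ^ (i+1) :=
    Finset.sum_congr rfl fun i _ => h1 i
  have h5 : (∑ i ∈ Finset.range n, a ^ 2 ^ (i+1)) + a = (∑ i ∈ Finset.range n, a ^ 2 ^ i) + a := by
    rw [← h2, h3]
  rw [h4]
  exact add_right_cancel h5

lemma tr19_art [CommRing F] (htwo : (2:F) = 0) (n : ℕ) (u : F) (hu : u ^ 2 ^ n = u) :
    tr19 n (u ^ 2 + u) = 0 := by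
  rw [tr19_add htwo, tr19_sq n u hu]
  linear_combination (tr19 n u) * htwo

lemma aniso19 [Field F] (htwo : (2:F) = 0) (n : ℕ) (hq : ∀ x : F, x ^ 2 ^ n = x)
    (δ c A g t : F) (ht : t ≠ 0) (hg : g ≠ 0)
    (hδ : tr19 n δ = 1) (hc : tr19 n (c * (t⁻¹) ^ 2) = 0)
    (heq : A ^ 2 + t * A * g + (δ * t ^ 2 + c) * g ^ 2 = 0) : False := by
  have hti : t * t⁻¹ = 1 := mul_inv_cancel₀ ht
  have hgi : g * g⁻¹ = 1 := mul_inv_cancel₀ hg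
  have key : (A * g⁻¹ * t⁻¹) ^ 2 + (A * g⁻¹ * t⁻¹) = δ + c * (t⁻¹) ^ 2 := by
    linear_combination (g⁻¹ * t⁻¹) ^ 2 * heq
      - (A * g⁻¹ * t⁻¹ * (t * t⁻¹) + δ * (g * g⁻¹ + 1) * (t * t⁻¹) ^ 2
          + c * (t⁻¹) ^ 2 * (g * g⁻¹ + 1)) * hgi
      - (A * g⁻¹ * t⁻¹ + δ * (t * t⁻¹ + 1)) * hti - (c * t⁻¹ ^ 2 + δ) * htwo
  have h0 := tr19_art htwo n (A * g⁻¹ * t⁻¹) (hq _)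
  rw [key, tr19_add htwo, hδ, hc] at h0
  simp at h0

lemma exists_notmem19 {F : Type*} [Fintype F] [DecidableEq F] (s : Finset F)
    (hs : s.card < Fintype.card F) : ∃ x : F, x ∉ s := by
  by_contra hcon
  push_neg at hcon
  have hsub : Finset.univ ⊆ s := fun x _ => hcon x
  have := Finset.card_le_card hsub
  rw [Finset.card_univ] at this
  omega

set_option maxHeartbeats 1600000 in
lemma point_key [Field F] (htwo : (2:F) = 0) (m : ℕ) (hm : m ≠ 0)
    (hfr : ∀ a b : F, (a + b) ^ m = a ^ m + b ^ m)
    (hσσ : ∀ x : F, (x ^ m) ^ m = x ^ 2)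
    (δ y₁ a₁ z₂ s0 t : F)
    (h1 : s0 ^ 2 + δ * t ^ 2 + s0 * t = y₁ * t + a₁)
    (h2 : s0 ^ (m + 2) + t ^ m + s0 * t = y₁ * t + z₂) :
    (t^3 * c1v δ (δ^m) (y₁^2) (y₁^m) (y₁^2 + a₁) ((y₁^2 + a₁)^m) (y₁^2 * y₁^m + z₂) ((y₁^2 * y₁^m + z₂)^m)
      + t * c2v δ (δ^m) (y₁^2) (y₁^m) (y₁^2 + a₁) ((y₁^2 + a₁)^m) (y₁^2 * y₁^m + z₂) ((y₁^2 * y₁^m + z₂)^m)) * (s0 + y₁)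
    + (g4v δ (δ^m) (y₁^2) (y₁^m) (y₁^2 + a₁) ((y₁^2 + a₁)^m) (y₁^2 * y₁^m + z₂) ((y₁^2 * y₁^m + z₂)^m) * t^4
      + g2v δ (δ^m) (y₁^2) (y₁^m) (y₁^2 + a₁) ((y₁^2 + a₁)^m) (y₁^2 * y₁^m + z₂) ((y₁^2 * y₁^m + z₂)^m) * t^2
      + g0v δ (δ^m) (y₁^2) (y₁^m) (y₁^2 + a₁) ((y₁^2 + a₁)^m) (y₁^2 * y₁^m + z₂) ((y₁^2 * y₁^m + z₂)^m)) = 0 := by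
  have hS : (s0 + y₁) ^ m = s0 ^ m + y₁ ^ m := hfr s0 y₁
  have hG1 : (s0 + y₁)^2 + δ*t^2 + (s0 + y₁)*t + (y₁^2 + a₁) = 0 := by
    linear_combination h1 + (s0 * y₁ + y₁ ^ 2 + y₁ * t + a₁) * htwo
  have hpows : s0 ^ (m + 2) = s0 ^ m * s0 ^ 2 := pow_add s0 m 2
  have hG2 : (s0 + y₁)^2*(s0 ^ m + y₁ ^ m) + (y₁^2)*(s0 ^ m + y₁ ^ m) + (y₁^m)*(s0 + y₁)^2
      + t^m + (s0 + y₁)*t + (y₁^2 * y₁^m + z₂) = 0 := by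
    rw [hpows] at h2
    linear_combination h2 + (s0 ^ 2 * y₁ ^ m + s0 * y₁ * s0 ^ m + 2 * s0 * y₁ * y₁ ^ m
      + y₁ ^ 2 * s0 ^ m + 2 * y₁ ^ 2 * y₁ ^ m + y₁ * t + z₂) * htwo
  -- raise hG1 to the m-th power
  have hx1 : ((s0 + y₁)^2)^m = (s0 ^ m + y₁ ^ m)^2 := by rw [← hS, pow_right_comm]
  have hx2 : (δ*t^2)^m = δ^m*(t^m)^2 := by rw [mul_pow, pow_right_comm]
  have hx3 : ((s0 + y₁)*t)^m = (s0 ^ m + y₁ ^ m)*t^m := by rw [mul_pow, hS]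
  have hG3 : (s0 ^ m + y₁ ^ m)^2 + (δ^m)*(t^m)^2 + (s0 ^ m + y₁ ^ m)*(t^m) + ((y₁^2 + a₁)^m) = 0 := by
    have h3 := congrArg (fun x : F => x ^ m) hG1
    rw [zero_pow hm, hfr, hfr, hfr, hx1, hx2, hx3] at h3
    linear_combination h3
  -- raise hG2 to the m-th power
  have hSm : (s0 ^ m + y₁ ^ m) ^ m = (s0 + y₁)^2 := by rw [← hS]; exact hσσ _
  have hy1 : ((s0 + y₁)^2*(s0 ^ m + y₁ ^ m))^m = (s0 ^ m + y₁ ^ m)^2*(s0 + y₁)^2 := by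
    rw [mul_pow, hSm, hx1]
  have hy2 : ((y₁^2)*(s0 ^ m + y₁ ^ m))^m = (y₁^m)^2*(s0 + y₁)^2 := by
    rw [mul_pow, hSm, pow_right_comm]
  have hy3 : ((y₁^m)*(s0 + y₁)^2)^m = (y₁^2)*(s0 ^ m + y₁ ^ m)^2 := by
    rw [mul_pow, hσσ, hx1]
  have hy4 : (t^m)^m = t^2 := hσσ t
  have hy5 : ((s0 + y₁)*t)^m = (s0 ^ m + y₁ ^ m)*t^m := hx3
  have hG4 : (s0 ^ m + y₁ ^ m)^2*(s0 + y₁)^2 + (y₁^m)^2*(s0 + y₁)^2 + (y₁^2)*(s0 ^ m + y₁ ^ m)^2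
      + t^2 + (s0 ^ m + y₁ ^ m)*(t^m) + ((y₁^2 * y₁^m + z₂)^m) = 0 := by
    have h4 := congrArg (fun x : F => x ^ m) hG2
    rw [zero_pow hm, hfr, hfr, hfr, hfr, hfr, hy1, hy2, hy3, hy4, hy5] at h4
    linear_combination h4
  exact key_lemma htwo (s0 + y₁) t (s0 ^ m + y₁ ^ m) (t ^ m) δ (δ^m) (y₁^2) (y₁^m)
    (y₁^2 + a₁) ((y₁^2 + a₁)^m) (y₁^2 * y₁^m + z₂) ((y₁^2 * y₁^m + z₂)^m)
    hG1 hG2 hG3 hG4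

end Aux

set_option maxHeartbeats 3200000 in
set_option maxRecDepth 10000 in
/-- For `q = 2^(2e+1)`, `σ = 2^(e+1)`, and `a₁, z₂, y₁, δ ∈ F_q` with `δ` of
absolute trace 1 and `z₂ ≠ y₁`: the conic `s² + δt² + st = y₁t + a₁` and the
oval `s^(σ+2) + t^σ + st = y₁t + z₂` have at most 4 common solutions. -/
theorem stmt_19 (e : ℕ) (he : 1 ≤ e) (F : Type*) [Field F] [Fintype F]
    (hF : Fintype.card F = 2 ^ (2 * e + 1)) (a₁ z₂ y₁ δ : F)
    (hδtr : ∑ i ∈ Finset.range (2 * e + 1), δ ^ (2 ^ i) = 1)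
    (hz : z₂ ≠ y₁) :
    {p : F × F | p.1 ^ 2 + δ * p.2 ^ 2 + p.1 * p.2 = y₁ * p.2 + a₁ ∧
        p.1 ^ (2 ^ (e + 1) + 2) + p.2 ^ (2 ^ (e + 1)) + p.1 * p.2
          = y₁ * p.2 + z₂}.ncard ≤ 4 := by
  classical
  -- characteristic 2
  haveI : CharP F (ringChar F) := ringChar.charP F
  have hprime : (ringChar F).Prime := CharP.char_is_prime F _
  obtain ⟨nn, -, hcard⟩ := FiniteField.card F (ringChar F)
  have hchar2 : ringChar F = 2 := by
    have hdvd : ringChar F ∣ 2 ^ (2 * e + 1) := by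
      rw [← hF, hcard]
      exact dvd_pow_self _ (by exact_mod_cast nn.ne_zero)
    have h2 := Nat.Prime.dvd_of_dvd_pow (n := 2 * e + 1) hprime hdvd
    exact (Nat.prime_dvd_prime_iff_eq hprime Nat.prime_two).mp h2
  have htwo : (2 : F) = 0 := by
    have h0 := CharP.cast_eq_zero F (ringChar F)
    rw [hchar2] at h0
    exact_mod_cast h0
  have hq : ∀ x : F, x ^ 2 ^ (2 * e + 1) = x := by
    intro x
    rw [← hF]
    exact FiniteField.pow_card x
  have hm0 : (2 : ℕ) ^ (e + 1) ≠ 0 := by positivity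
  have hfr : ∀ a b : F, (a + b) ^ 2 ^ (e + 1) = a ^ 2 ^ (e + 1) + b ^ 2 ^ (e + 1) :=
    fun a b => pow2_add htwo (e + 1) a b
  have hσσ : ∀ x : F, (x ^ 2 ^ (e + 1)) ^ 2 ^ (e + 1) = x ^ 2 := by
    intro x
    rw [← pow_mul, ← pow_add]
    have h1 : (e + 1) + (e + 1) = (2 * e + 1) + 1 := by omega
    rw [h1, pow_succ, pow_mul, hq x]
  have hTrδ : tr19 (2 * e + 1) δ = 1 := hδtr
  have hTr0 : tr19 (2 * e + 1) (0 : F) = 0 := by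
    unfold tr19
    apply Finset.sum_eq_zero
    intro i _
    exact zero_pow (by positivity)
  have hsq : ∀ x : F, (x ^ 2 ^ (2 * e)) ^ 2 = x := by
    intro x
    rw [← pow_mul, ← pow_succ]
    exact hq x
  have hcard8 : 8 ≤ Fintype.card F := by
    rw [hF]
    calc (8 : ℕ) = 2 ^ 3 := by norm_num
    _ ≤ 2 ^ (2 * e + 1) := Nat.pow_le_pow_right (by norm_num) (by omega)
  by_cases hk : y₁ ^ 2 + a₁ = 0
  · -- degenerate conic: at most one point
    have hsub : {p : F × F | p.1 ^ 2 + δ * p.2 ^ 2 + p.1 * p.2 = y₁ * p.2 + a₁ ∧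
        p.1 ^ (2 ^ (e + 1) + 2) + p.2 ^ (2 ^ (e + 1)) + p.1 * p.2
          = y₁ * p.2 + z₂} ⊆ {(y₁, (0 : F))} := by
      rintro ⟨s0, t⟩ ⟨h1, h2⟩
      simp only at h1 h2
      by_cases ht : t = 0
      · subst ht
        have h3 : (s0 - y₁) ^ 2 = 0 := by linear_combination h1 + hk - s0 * y₁ * htwo
        have h4 : s0 = y₁ := sub_eq_zero.mp ((pow_eq_zero_iff (two_ne_zero)).mp h3)
        simp [h4]
      · exfalso
        have heq : (s0 - y₁) ^ 2 + t * (s0 - y₁) * 1 + (δ * t ^ 2 + 0) * 1 ^ 2 = 0 := by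
          linear_combination h1 + hk - s0 * y₁ * htwo
        have hc : tr19 (2 * e + 1) ((0 : F) * (t⁻¹) ^ 2) = 0 := by
          rw [zero_mul]; exact hTr0
        exact aniso19 htwo (2 * e + 1) hq δ 0 (s0 - y₁) 1 t ht one_ne_zero hTrδ hc heq
    calc ({p : F × F | p.1 ^ 2 + δ * p.2 ^ 2 + p.1 * p.2 = y₁ * p.2 + a₁ ∧
        p.1 ^ (2 ^ (e + 1) + 2) + p.2 ^ (2 ^ (e + 1)) + p.1 * p.2
          = y₁ * p.2 + z₂}).ncard ≤ ({(y₁, (0:F))} : Set (F × F)).ncard :=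
        Set.ncard_le_ncard hsub (Set.finite_singleton _)
    _ ≤ 4 := by rw [Set.ncard_singleton]; norm_num
  · -- main case
    set Dl := δ ^ 2 ^ (e + 1) with hDl
    set Y := y₁ ^ 2 ^ (e + 1) with hY
    set k := y₁ ^ 2 + a₁ with hkdef
    set K := k ^ 2 ^ (e + 1) with hK
    set w := y₁ ^ 2 * Y + z₂ with hw
    set W := w ^ 2 ^ (e + 1) with hW
    have hkne : k ≠ 0 := hk
    -- the key algebraic identity at every intersection point
    have hKey : ∀ s0 t : F,
        s0 ^ 2 + δ * t ^ 2 + s0 * t = y₁ * t + a₁ →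
        s0 ^ (2 ^ (e + 1) + 2) + t ^ 2 ^ (e + 1) + s0 * t = y₁ * t + z₂ →
        (t ^ 3 * c1v δ Dl (y₁ ^ 2) Y k K w W + t * c2v δ Dl (y₁ ^ 2) Y k K w W) * (s0 + y₁)
          + (g4v δ Dl (y₁ ^ 2) Y k K w W * t ^ 4 + g2v δ Dl (y₁ ^ 2) Y k K w W * t ^ 2 + g0v δ Dl (y₁ ^ 2) Y k K w W) = 0 := by
      intro s0 t h1 h2
      have h := point_key htwo (2 ^ (e + 1)) hm0 hfr hσσ δ y₁ a₁ z₂ s0 t h1 h2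
      rw [← hY, ← hkdef, ← hDl, ← hw, ← hK, ← hW] at h
      exact h
    have hEval0 : ∀ s0 t : F,
        s0 ^ 2 + δ * t ^ 2 + s0 * t = y₁ * t + a₁ →
        s0 ^ (2 ^ (e + 1) + 2) + t ^ 2 ^ (e + 1) + s0 * t = y₁ * t + z₂ →
        (q4 δ Dl (y₁ ^ 2) Y k K w W).eval (t ^ 2) = 0 := by
      intro s0 t h1 h2
      have hk' := hKey s0 t h1 h2
      have hG1 : (s0 + y₁) ^ 2 + δ * t ^ 2 + (s0 + y₁) * t + k = 0 := by
        rw [hkdef]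
        linear_combination h1 + (s0 * y₁ + y₁ ^ 2 + y₁ * t + a₁) * htwo
      rw [q4_eval]
      linear_combination
        ((g4v δ Dl (y₁ ^ 2) Y k K w W * t ^ 4 + g2v δ Dl (y₁ ^ 2) Y k K w W * t ^ 2 + g0v δ Dl (y₁ ^ 2) Y k K w W)
          + t * (t ^ 3 * c1v δ Dl (y₁ ^ 2) Y k K w W + t * c2v δ Dl (y₁ ^ 2) Y k K w W)
          + (t ^ 3 * c1v δ Dl (y₁ ^ 2) Y k K w W + t * c2v δ Dl (y₁ ^ 2) Y k K w W) * (s0 + y₁)) * hk'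
        + (t ^ 3 * c1v δ Dl (y₁ ^ 2) Y k K w W + t * c2v δ Dl (y₁ ^ 2) Y k K w W) ^ 2 * hG1
        - ((g4v δ Dl (y₁ ^ 2) Y k K w W * t ^ 4 + g2v δ Dl (y₁ ^ 2) Y k K w W * t ^ 2 + g0v δ Dl (y₁ ^ 2) Y k K w W)
            * (t ^ 3 * c1v δ Dl (y₁ ^ 2) Y k K w W + t * c2v δ Dl (y₁ ^ 2) Y k K w W) * (s0 + y₁)
          + (t ^ 3 * c1v δ Dl (y₁ ^ 2) Y k K w W + t * c2v δ Dl (y₁ ^ 2) Y k K w W) ^ 2 * (s0 + y₁) ^ 2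
          + t * (t ^ 3 * c1v δ Dl (y₁ ^ 2) Y k K w W + t * c2v δ Dl (y₁ ^ 2) Y k K w W) ^ 2 * (s0 + y₁)) * htwo
    -- the quartic is nonzero
    have hE1ne : q4 δ Dl (y₁ ^ 2) Y k K w W ≠ 0 := by
      intro h0
      have heval : ∀ u : F,
          (g4v δ Dl (y₁ ^ 2) Y k K w W * u ^ 2 + g2v δ Dl (y₁ ^ 2) Y k K w W * u + g0v δ Dl (y₁ ^ 2) Y k K w W) ^ 2
          + u * (g4v δ Dl (y₁ ^ 2) Y k K w W * u ^ 2 + g2v δ Dl (y₁ ^ 2) Y k K w W * u + g0v δ Dl (y₁ ^ 2) Y k K w W)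
              * (c1v δ Dl (y₁ ^ 2) Y k K w W * u + c2v δ Dl (y₁ ^ 2) Y k K w W)
          + (δ * u + k) * (u * (c1v δ Dl (y₁ ^ 2) Y k K w W * u + c2v δ Dl (y₁ ^ 2) Y k K w W) ^ 2) = 0 := by
        intro u
        rw [← q4_eval, h0, eval_zero]
      obtain ⟨u0, hu0mem⟩ := exists_notmem19 ({0, 1} : Finset F) (by
        calc ({0, 1} : Finset F).card ≤ ({1} : Finset F).card + 1 := Finset.card_insert_le _ _
        _ ≤ 2 := by rw [Finset.card_singleton]
        _ < Fintype.card F := by omega)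
      simp only [Finset.mem_insert, Finset.mem_singleton, not_or] at hu0mem
      obtain ⟨hu00, hu01⟩ := hu0mem
      obtain ⟨v0, hv0mem⟩ := exists_notmem19 ({0, 1, u0, u0 + 1} : Finset F) (by
        calc ({0, 1, u0, u0 + 1} : Finset F).card
            ≤ ({1, u0, u0 + 1} : Finset F).card + 1 := Finset.card_insert_le _ _
        _ ≤ (({u0, u0 + 1} : Finset F).card + 1) + 1 := by
              have := Finset.card_insert_le (1:F) ({u0, u0+1} : Finset F); omega
        _ ≤ ((({u0 + 1} : Finset F).card + 1) + 1) + 1 := by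
              have := Finset.card_insert_le u0 ({u0+1} : Finset F); omega
        _ ≤ 4 := by rw [Finset.card_singleton]
        _ < Fintype.card F := by omega)
      simp only [Finset.mem_insert, Finset.mem_singleton, not_or] at hv0mem
      obtain ⟨hv00, hv01, hv0u, hv0u1⟩ := hv0mem
      have hadd1 : ∀ x : F, x + 1 = 0 → x = 1 := by
        intro x hx
        linear_combination hx - htwo
      -- the two trace-zero elements
      have hx1tr : tr19 (2 * e + 1) (u0 ^ 2 + u0) = 0 := tr19_art htwo _ u0 (hq u0)
      have hx2tr : tr19 (2 * e + 1) (v0 ^ 2 + v0) = 0 := tr19_art htwo _ v0 (hq v0)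
      have hx1ne : u0 ^ 2 + u0 ≠ 0 := by
        intro h
        have hff : u0 * (u0 + 1) = 0 := by linear_combination h
        rcases mul_eq_zero.mp hff with h' | h'
        · exact hu00 h'
        · exact hu01 (hadd1 _ h')
      have hx2ne : v0 ^ 2 + v0 ≠ 0 := by
        intro h
        have hff : v0 * (v0 + 1) = 0 := by linear_combination h
        rcases mul_eq_zero.mp hff with h' | h'
        · exact hv00 h'
        · exact hv01 (hadd1 _ h')
      have hx12 : u0 ^ 2 + u0 ≠ v0 ^ 2 + v0 := by
        intro h
        have hff : (u0 - v0) * (u0 + v0 + 1) = 0 := by linear_combination h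
        rcases mul_eq_zero.mp hff with h' | h'
        · exact hv0u (sub_eq_zero.mp h').symm
        · have : v0 = u0 + 1 := by linear_combination h' - (1 + u0) * htwo
          exact hv0u1 this
      -- for x with trace 0, the value c1v * (k/x) + c2v vanishes
      have hBzero : ∀ x : F, x ≠ 0 → tr19 (2 * e + 1) x = 0 →
          c1v δ Dl (y₁ ^ 2) Y k K w W * (k * x⁻¹) + c2v δ Dl (y₁ ^ 2) Y k K w W = 0 := by
        intro x hx htr
        set τ := (k * x⁻¹) ^ 2 ^ (2 * e) with hτ
        have hτsq : τ ^ 2 = k * x⁻¹ := hsq _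
        have hkx : k * x⁻¹ ≠ 0 := mul_ne_zero hkne (inv_ne_zero hx)
        have hτne : τ ≠ 0 := by
          intro h
          rw [h] at hτsq
          exact hkx (by linear_combination -hτsq)
        by_contra hBne
        rw [← hτsq] at hBne
        have heq : (g4v δ Dl (y₁ ^ 2) Y k K w W * (τ ^ 2) ^ 2 + g2v δ Dl (y₁ ^ 2) Y k K w W * τ ^ 2 + g0v δ Dl (y₁ ^ 2) Y k K w W) ^ 2
            + τ * (g4v δ Dl (y₁ ^ 2) Y k K w W * (τ ^ 2) ^ 2 + g2v δ Dl (y₁ ^ 2) Y k K w W * τ ^ 2 + g0v δ Dl (y₁ ^ 2) Y k K w W)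
                * (τ * (c1v δ Dl (y₁ ^ 2) Y k K w W * τ ^ 2 + c2v δ Dl (y₁ ^ 2) Y k K w W))
            + (δ * τ ^ 2 + k) * (τ * (c1v δ Dl (y₁ ^ 2) Y k K w W * τ ^ 2 + c2v δ Dl (y₁ ^ 2) Y k K w W)) ^ 2 = 0 := by
          linear_combination heval (τ ^ 2)
        have hc : tr19 (2 * e + 1) (k * (τ⁻¹) ^ 2) = 0 := by
          have hrw : k * (τ⁻¹) ^ 2 = x := by
            rw [inv_pow, hτsq]
            field_simp
          rw [hrw]
          exact htr
        exact aniso19 htwo (2 * e + 1) hq δ k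
          (g4v δ Dl (y₁ ^ 2) Y k K w W * (τ ^ 2) ^ 2 + g2v δ Dl (y₁ ^ 2) Y k K w W * τ ^ 2 + g0v δ Dl (y₁ ^ 2) Y k K w W)
          (τ * (c1v δ Dl (y₁ ^ 2) Y k K w W * τ ^ 2 + c2v δ Dl (y₁ ^ 2) Y k K w W)) τ hτne (mul_ne_zero hτne hBne)
          hTrδ hc heq
      have hB1 := hBzero _ hx1ne hx1tr
      have hB2 := hBzero _ hx2ne hx2tr
      have hux : k * (u0 ^ 2 + u0)⁻¹ ≠ k * (v0 ^ 2 + v0)⁻¹ := by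
        intro h
        have h1 := mul_left_cancel₀ hkne h
        exact hx12 (inv_injective h1)
      have hc1 : c1v δ Dl (y₁ ^ 2) Y k K w W = 0 := by
        have hff : c1v δ Dl (y₁ ^ 2) Y k K w W * (k * (u0 ^ 2 + u0)⁻¹ - k * (v0 ^ 2 + v0)⁻¹) = 0 := by
          linear_combination hB1 - hB2
        rcases mul_eq_zero.mp hff with h' | h'
        · exact h'
        · exact absurd (sub_eq_zero.mp h') hux
      have hc2 : c2v δ Dl (y₁ ^ 2) Y k K w W = 0 := by
        linear_combination hB1 - (k * (u0 ^ 2 + u0)⁻¹) * hc1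
      -- now all A-coefficients vanish
      have hA0 : g0v δ Dl (y₁ ^ 2) Y k K w W = 0 := by
        have h1 := heval 0
        have h2 : (g0v δ Dl (y₁ ^ 2) Y k K w W) ^ 2 = 0 := by linear_combination h1
        exact (pow_eq_zero_iff two_ne_zero).mp h2
      have hA1 : g4v δ Dl (y₁ ^ 2) Y k K w W + g2v δ Dl (y₁ ^ 2) Y k K w W + g0v δ Dl (y₁ ^ 2) Y k K w W = 0 := by
        have h1 := heval 1
        rw [hc1, hc2] at h1
        have h2 : (g4v δ Dl (y₁ ^ 2) Y k K w W + g2v δ Dl (y₁ ^ 2) Y k K w W + g0v δ Dl (y₁ ^ 2) Y k K w W) ^ 2 = 0 := by linear_combination h1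
        exact (pow_eq_zero_iff two_ne_zero).mp h2
      have hAe : g4v δ Dl (y₁ ^ 2) Y k K w W * (u0 ^ 2) ^ 2 + g2v δ Dl (y₁ ^ 2) Y k K w W * u0 ^ 2 + g0v δ Dl (y₁ ^ 2) Y k K w W = 0 := by
        have h1 := heval (u0 ^ 2)
        rw [hc1, hc2] at h1
        have h2 : (g4v δ Dl (y₁ ^ 2) Y k K w W * (u0 ^ 2) ^ 2 + g2v δ Dl (y₁ ^ 2) Y k K w W * u0 ^ 2 + g0v δ Dl (y₁ ^ 2) Y k K w W) ^ 2 = 0 := by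
          linear_combination h1
        exact (pow_eq_zero_iff two_ne_zero).mp h2
      have hu0sq1 : u0 ^ 2 - 1 ≠ 0 := by
        intro h
        have hff : (u0 - 1) * (u0 + 1) = 0 := by linear_combination h
        rcases mul_eq_zero.mp hff with h' | h'
        · exact hu01 (sub_eq_zero.mp h')
        · exact hu01 (hadd1 _ h')
      have hg4 : g4v δ Dl (y₁ ^ 2) Y k K w W = 0 := by
        have hff : g4v δ Dl (y₁ ^ 2) Y k K w W * (u0 ^ 2 * (u0 ^ 2 - 1)) = 0 := by
          linear_combination hAe - u0 ^ 2 * hA1 - (1 - u0 ^ 2) * hA0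
        rcases mul_eq_zero.mp hff with h' | h'
        · exact h'
        · exact absurd h' (mul_ne_zero (pow_ne_zero 2 hu00) hu0sq1)
      have hg2 : g2v δ Dl (y₁ ^ 2) Y k K w W = 0 := by linear_combination hA1 - hg4 - hA0
      -- w = 0
      have hw2 : w ^ 2 = 0 := by
        simp only [c1v, c2v, g2v] at hc1 hc2 hg2
        linear_combination hg2 - δ * hc2 - k * hc1
      have hwz : w = 0 := (pow_eq_zero_iff two_ne_zero).mp hw2
      have hWz : W = 0 := by rw [hW, hwz]; exact zero_pow hm0
      rw [hwz, hWz] at hA0 hc1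
      simp only [g0v, c1v] at hA0 hc1
      have hKk : K * k ^ 2 = 0 := by linear_combination k ^ 2 * hc1 - hA0
      have hKne : K ≠ 0 := by rw [hK]; exact pow_ne_zero _ hkne
      exact (mul_ne_zero hKne (pow_ne_zero 2 hkne)) hKk
    -- counting
    have hfin : ({p : F × F | p.1 ^ 2 + δ * p.2 ^ 2 + p.1 * p.2 = y₁ * p.2 + a₁ ∧
        p.1 ^ (2 ^ (e + 1) + 2) + p.2 ^ (2 ^ (e + 1)) + p.1 * p.2
          = y₁ * p.2 + z₂} : Set (F × F)).Finite := Set.toFinite _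
    rw [Set.ncard_eq_toFinset_card _ hfin]
    have hmemJ : ∀ p : F × F, p ∈ hfin.toFinset ↔
        (p.1 ^ 2 + δ * p.2 ^ 2 + p.1 * p.2 = y₁ * p.2 + a₁ ∧
          p.1 ^ (2 ^ (e + 1) + 2) + p.2 ^ (2 ^ (e + 1)) + p.1 * p.2 = y₁ * p.2 + z₂) := by
      intro p
      rw [Set.Finite.mem_toFinset]
      rfl
    rw [Finset.card_eq_sum_card_image (fun p : F × F => p.2 ^ 2) hfin.toFinset]
    have hbound : ∀ u ∈ (hfin.toFinset).image (fun p : F × F => p.2 ^ 2),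
        ((hfin.toFinset).filter (fun x => x.2 ^ 2 = u)).card
          ≤ (q4 δ Dl (y₁ ^ 2) Y k K w W).roots.count u := by
      intro u hu
      obtain ⟨p, hpJ, hpu⟩ := Finset.mem_image.mp hu
      obtain ⟨h1p, h2p⟩ := (hmemJ p).mp hpJ
      have hroot : (q4 δ Dl (y₁ ^ 2) Y k K w W).IsRoot u := by
        rw [Polynomial.IsRoot, ← hpu]
        exact hEval0 p.1 p.2 h1p h2p
      have hcount1 : 1 ≤ (q4 δ Dl (y₁ ^ 2) Y k K w W).roots.count u := by
        rw [Polynomial.count_roots]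
        exact (Polynomial.rootMultiplicity_pos hE1ne).mpr hroot
      by_cases hone : ∀ q ∈ (hfin.toFinset).filter (fun x => x.2 ^ 2 = u), q = p
      · have hss : (hfin.toFinset).filter (fun x => x.2 ^ 2 = u) ⊆ {p} :=
          fun q hq => Finset.mem_singleton.mpr (hone q hq)
        calc ((hfin.toFinset).filter (fun x => x.2 ^ 2 = u)).card ≤ ({p} : Finset (F × F)).card :=
            Finset.card_le_card hss
        _ = 1 := Finset.card_singleton _
        _ ≤ _ := hcount1
      · push_neg at hone
        obtain ⟨qq, hqf, hqp⟩ := hone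
        obtain ⟨hqJ, hqu⟩ := Finset.mem_filter.mp hqf
        obtain ⟨h1q, h2q⟩ := (hmemJ qq).mp hqJ
        have ht2 : qq.2 = p.2 := by
          have h5 : (qq.2 - p.2) ^ 2 = 0 := by
            linear_combination hqu - hpu + (p.2 ^ 2 - qq.2 * p.2) * htwo
          exact sub_eq_zero.mp ((pow_eq_zero_iff two_ne_zero).mp h5)
        have hs12 : qq.1 ≠ p.1 := fun h => hqp (Prod.ext h ht2)
        have ht0 : p.2 ≠ 0 := by
          intro h0
          apply hs12
          rw [ht2, h0] at h1q
          rw [h0] at h1p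
          have e1 : qq.1 ^ 2 = p.1 ^ 2 := by linear_combination h1q - h1p
          have h5 : (qq.1 - p.1) ^ 2 = 0 := by
            linear_combination e1 + (p.1 ^ 2 - qq.1 * p.1) * htwo
          exact sub_eq_zero.mp ((pow_eq_zero_iff two_ne_zero).mp h5)
        rw [ht2] at h1q h2q
        have hsum : qq.1 + p.1 + p.2 = 0 := by
          have hfac : (qq.1 - p.1) * (qq.1 + p.1 + p.2) = 0 := by
            linear_combination h1q - h1p
          rcases mul_eq_zero.mp hfac with h' | h'
          · exact absurd (sub_eq_zero.mp h') hs12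
          · exact h'
        have hKp := hKey p.1 p.2 h1p h2p
        have hKq := hKey qq.1 p.2 h1q h2q
        have hgv : (p.2 ^ 3 * c1v δ Dl (y₁ ^ 2) Y k K w W + p.2 * c2v δ Dl (y₁ ^ 2) Y k K w W) * (qq.1 - p.1) = 0 := by
          linear_combination hKq - hKp
        have hgv0 : p.2 ^ 3 * c1v δ Dl (y₁ ^ 2) Y k K w W + p.2 * c2v δ Dl (y₁ ^ 2) Y k K w W = 0 := by
          rcases mul_eq_zero.mp hgv with h' | h'
          · exact h'
          · exact absurd (sub_eq_zero.mp h') hs12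
        have hB : c1v δ Dl (y₁ ^ 2) Y k K w W * p.2 ^ 2 + c2v δ Dl (y₁ ^ 2) Y k K w W = 0 := by
          have h6 : p.2 * (c1v δ Dl (y₁ ^ 2) Y k K w W * p.2 ^ 2 + c2v δ Dl (y₁ ^ 2) Y k K w W) = 0 := by
            linear_combination hgv0
          rcases mul_eq_zero.mp h6 with h' | h'
          · exact absurd h' ht0
          · exact h'
        have hA : g4v δ Dl (y₁ ^ 2) Y k K w W * p.2 ^ 4 + g2v δ Dl (y₁ ^ 2) Y k K w W * p.2 ^ 2 + g0v δ Dl (y₁ ^ 2) Y k K w W = 0 := by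
          linear_combination hKp - (p.1 + y₁) * hgv0
        have hdA : (X - C u) ∣ q4A δ Dl (y₁ ^ 2) Y k K w W := by
          rw [Polynomial.dvd_iff_isRoot]
          show (q4A δ Dl (y₁ ^ 2) Y k K w W).eval u = 0
          simp only [q4A, eval_add, eval_mul, eval_pow, eval_C, eval_X]
          rw [← hpu]
          linear_combination hA
        have hdB : (X - C u) ∣ q4B δ Dl (y₁ ^ 2) Y k K w W := by
          rw [Polynomial.dvd_iff_isRoot]
          show (q4B δ Dl (y₁ ^ 2) Y k K w W).eval u = 0
          simp only [q4B, eval_add, eval_mul, eval_C, eval_X]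
          rw [← hpu]
          linear_combination hB
        have hdvd : (X - C u) ^ 2 ∣ q4 δ Dl (y₁ ^ 2) Y k K w W := by
          have d1 : (X - C u) ^ 2 ∣ (q4A δ Dl (y₁ ^ 2) Y k K w W) ^ 2 := pow_dvd_pow_of_dvd hdA 2
          have d2 : (X - C u) ^ 2 ∣ X * (q4A δ Dl (y₁ ^ 2) Y k K w W) * (q4B δ Dl (y₁ ^ 2) Y k K w W) := by
            rw [sq, mul_assoc]
            exact Dvd.dvd.mul_left (mul_dvd_mul hdA hdB) X
          have d3 : (X - C u) ^ 2 ∣ (C δ * X + C k) * (X * (q4B δ Dl (y₁ ^ 2) Y k K w W) ^ 2) := by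
            have hb2 : (X - C u) ^ 2 ∣ (q4B δ Dl (y₁ ^ 2) Y k K w W) ^ 2 := pow_dvd_pow_of_dvd hdB 2
            exact (hb2.mul_left X).mul_left _
          have hsum' := dvd_add (dvd_add d1 d2) d3
          show (X - C u) ^ 2 ∣ q4 δ Dl (y₁ ^ 2) Y k K w W
          rw [q4]
          exact hsum'
        have hcount2 : 2 ≤ (q4 δ Dl (y₁ ^ 2) Y k K w W).roots.count u := by
          rw [Polynomial.count_roots]
          exact (Polynomial.le_rootMultiplicity_iff hE1ne).mpr hdvd
        have hsub2 : (hfin.toFinset).filter (fun x => x.2 ^ 2 = u) ⊆ {p, qq} := by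
          intro r hr
          obtain ⟨hrJ, hru⟩ := Finset.mem_filter.mp hr
          obtain ⟨h1r, _⟩ := (hmemJ r).mp hrJ
          have hrt : r.2 = p.2 := by
            have h5 : (r.2 - p.2) ^ 2 = 0 := by
              linear_combination hru - hpu + (p.2 ^ 2 - r.2 * p.2) * htwo
            exact sub_eq_zero.mp ((pow_eq_zero_iff two_ne_zero).mp h5)
          by_cases hrp : r.1 = p.1
          · exact Finset.mem_insert.mpr (Or.inl (Prod.ext hrp hrt))
          · rw [hrt] at h1r
            have hsumr : r.1 + p.1 + p.2 = 0 := by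
              have hfac : (r.1 - p.1) * (r.1 + p.1 + p.2) = 0 := by
                linear_combination h1r - h1p
              rcases mul_eq_zero.mp hfac with h' | h'
              · exact absurd (sub_eq_zero.mp h') hrp
              · exact h'
            have hr1 : r.1 = qq.1 := by linear_combination hsumr - hsum
            exact Finset.mem_insert.mpr (Or.inr (Finset.mem_singleton.mpr (Prod.ext hr1 (hrt.trans ht2.symm))))
        calc ((hfin.toFinset).filter (fun x => x.2 ^ 2 = u)).card
            ≤ ({p, qq} : Finset (F × F)).card := Finset.card_le_card hsub2
        _ ≤ ({qq} : Finset (F × F)).card + 1 := Finset.card_insert_le _ _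
        _ ≤ 2 := by rw [Finset.card_singleton]
        _ ≤ _ := hcount2
    have hsubR : (hfin.toFinset).image (fun p : F × F => p.2 ^ 2)
        ⊆ (q4 δ Dl (y₁ ^ 2) Y k K w W).roots.toFinset := by
      intro u hu
      obtain ⟨p, hpJ, hpu⟩ := Finset.mem_image.mp hu
      obtain ⟨h1p, h2p⟩ := (hmemJ p).mp hpJ
      rw [Multiset.mem_toFinset, Polynomial.mem_roots']
      refine ⟨hE1ne, ?_⟩
      rw [Polynomial.IsRoot, ← hpu]
      exact hEval0 p.1 p.2 h1p h2p
    calc ∑ u ∈ (hfin.toFinset).image (fun p : F × F => p.2 ^ 2),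
          ((hfin.toFinset).filter (fun x => x.2 ^ 2 = u)).card
        ≤ ∑ u ∈ (hfin.toFinset).image (fun p : F × F => p.2 ^ 2),
            (q4 δ Dl (y₁ ^ 2) Y k K w W).roots.count u := Finset.sum_le_sum hbound
    _ ≤ ∑ u ∈ (q4 δ Dl (y₁ ^ 2) Y k K w W).roots.toFinset, (q4 δ Dl (y₁ ^ 2) Y k K w W).roots.count u :=
        Finset.sum_le_sum_of_subset hsubR
    _ = Multiset.card (q4 δ Dl (y₁ ^ 2) Y k K w W).roots := Multiset.toFinset_sum_count_eq _
    _ ≤ (q4 δ Dl (y₁ ^ 2) Y k K w W).natDegree := Polynomial.card_roots' _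
    _ ≤ 4 := q4_natDegree δ Dl (y₁ ^ 2) Y k K w W
end
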